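/- arXiv:1404.0001 — 8 statements merged into one kernel-verified Lean document; each statement's English description precedes it below -/
import Mathlib

section
/- Let l > 0 be a real number and let q : ℝ → ℝ be Lebesgue integrable on [0, l]. Then sup_{x ∈ [0,l]} ∫₀ˣ e^{−2τ(x−t)} |q(t)| dt → 0 as τ → +∞; that is, for every ε > 0 there exists τ₀ > 0 such that for all τ ≥ τ₀ and all x ∈ [0, l] one has ∫₀ˣ e^{−2τ(x−t)} |q(t)| dt ≤ ε. -/
/-!
Fix `δ > 0`. For `t ∈ (x - δ, x]` the kernel `e^{-2τ(x-t)}` is at most `1`, and by absolute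
continuity of the Lebesgue integral `∫ |q|` over any interval of length `δ` is small once `δ` is
small, uniformly in `x`. For `t ≤ x - δ` the kernel is at most `e^{-2τδ}`, so that part is bounded
by `e^{-2τδ} ∫₀ˡ |q|`, which tends to `0` as `τ → ∞`.
-/

open Real MeasureTheory Filter intervalIntegral

open scoped Topology

namespace MeasureTheory

variable {α : Type*} [MeasurableSpace α] {μ : Measure α}

theorem Integrable.exists_pos_forall_measure_le_setIntegral_le {f : α → ℝ} (hf : Integrable f μ)
    {ε : ℝ} (hε : 0 < ε) :
    ∃ δ > 0, ∀ s, μ s ≤ ENNReal.ofReal δ → ∫ x in s, f x ∂μ ≤ ε := by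
  obtain ⟨δ', hδ', hsmall⟩ :=
    exists_pos_setLIntegral_lt_of_measure_lt hf.2.ne (ENNReal.ofReal_pos.2 hε).ne'
  obtain ⟨δ, -, hδ_pos, hδ_lt⟩ := ENNReal.lt_iff_exists_real_btwn.1 hδ'
  refine ⟨δ, ENNReal.ofReal_pos.1 hδ_pos, fun s hs => ?_⟩
  have hnorm : ‖∫ x in s, f x ∂μ‖ₑ < ENNReal.ofReal ε :=
    (enorm_integral_le_lintegral_enorm f).trans_lt (hsmall s (hs.trans_lt hδ_lt))
  rw [← ofReal_norm, ENNReal.ofReal_lt_ofReal_iff hε] at hnorm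
  exact (le_abs_self _).trans hnorm.le

theorem setIntegral_mul_le_inter_add_mul {s u : Set α} (hs : MeasurableSet s)
    (hu : MeasurableSet u) {f K : α → ℝ} {η : ℝ} (hf : IntegrableOn f s μ)
    (hf0 : ∀ t ∈ s, 0 ≤ f t) (hK0 : ∀ t ∈ s, 0 ≤ K t) (hK1 : ∀ t ∈ s, K t ≤ 1)
    (hKη : ∀ t ∈ s \ u, K t ≤ η) (hη : 0 ≤ η) :
    ∫ t in s, K t * f t ∂μ ≤ ∫ t in s ∩ u, f t ∂μ + η * ∫ t in s, f t ∂μ := by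
  have hbound : ∀ t ∈ s, K t * f t ≤ u.indicator f t + η * f t := by
    intro t ht
    by_cases htu : t ∈ u
    · rw [Set.indicator_of_mem htu]
      nlinarith [hf0 t ht, hK1 t ht]
    · rw [Set.indicator_of_notMem htu, zero_add]
      exact mul_le_mul_of_nonneg_right (hKη t ⟨ht, htu⟩) (hf0 t ht)
  calc ∫ t in s, K t * f t ∂μ
      ≤ ∫ t in s, (u.indicator f t + η * f t) ∂μ :=
        integral_mono_of_nonneg
          (ae_restrict_of_forall_mem hs fun t ht => mul_nonneg (hK0 t ht) (hf0 t ht))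
          ((hf.indicator hu).add (hf.const_mul η)) (ae_restrict_of_forall_mem hs hbound)
    _ = ∫ t in s ∩ u, f t ∂μ + η * ∫ t in s, f t ∂μ := by
        rw [integral_add (hf.indicator hu) (hf.const_mul η), setIntegral_indicator hu,
          integral_const_mul]

end MeasureTheory

theorem intervalIntegral_exp_mul_abs_le {l x τ δ : ℝ} {q : ℝ → ℝ}
    (hq : IntegrableOn q (Set.Icc 0 l)) (hx : x ∈ Set.Icc 0 l) (hτ : 0 ≤ τ) :
    ∫ t in (0:ℝ)..x, exp (-2 * τ * (x - t)) * |q t|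
      ≤ (∫ t in Set.Ioc (x - δ) x ∩ Set.Icc 0 l, |q t|)
        + exp (-2 * τ * δ) * ∫ t in Set.Icc 0 l, |q t| := by
  have hsub : Set.Ioc 0 x ⊆ Set.Icc 0 l := fun t ht => ⟨ht.1.le, ht.2.trans hx.2⟩
  have habs : IntegrableOn (fun t => |q t|) (Set.Icc 0 l) := hq.abs
  rw [integral_of_le hx.1]
  calc _ ≤ (∫ t in Set.Ioc 0 x ∩ Set.Ioc (x - δ) x, |q t|)
          + exp (-2 * τ * δ) * ∫ t in Set.Ioc 0 x, |q t| := by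
        refine setIntegral_mul_le_inter_add_mul measurableSet_Ioc measurableSet_Ioc
          (habs.mono_set hsub) (fun t _ => abs_nonneg (q t)) (fun t _ => (exp_pos _).le)
          (fun t ht => exp_le_one_iff.2 ?_) (fun t ht => exp_le_exp.2 ?_) (exp_pos _).le
        · nlinarith [ht.2]
        · have htδ : t ≤ x - δ := by
            by_contra! h
            exact ht.2 ⟨h, ht.1.2⟩
          nlinarith
    _ ≤ _ := by
        gcongr ?_ + exp (-2 * τ * δ) * ?_
        · exact setIntegral_mono_set (habs.mono_set Set.inter_subset_right)
            (ae_of_all _ fun t => abs_nonneg (q t))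
            (Eventually.of_forall fun t ht => ⟨ht.2, hsub ht.1⟩)
        · exact setIntegral_mono_set habs (ae_of_all _ fun t => abs_nonneg (q t))
            (Eventually.of_forall hsub)

theorem convolution_decay_general (l : ℝ) (q : ℝ → ℝ)
    (hq : IntegrableOn q (Set.Icc 0 l)) :
    ∀ ε > 0, ∃ τ₀ > 0, ∀ τ ≥ τ₀, ∀ x ∈ Set.Icc 0 l,
      (∫ t in (0:ℝ)..x, Real.exp (-2 * τ * (x - t)) * |q t|) ≤ ε := by
  intro ε hε
  obtain ⟨δ, hδ, hlocal⟩ :=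
    hq.abs.exists_pos_forall_measure_le_setIntegral_le (half_pos hε)
  have htail : ∀ᶠ τ in atTop, exp (-2 * τ * δ) * ∫ t in Set.Icc 0 l, |q t| ≤ ε / 2 := by
    have hlin : Tendsto (fun τ => 2 * δ * τ) atTop atTop :=
      tendsto_id.const_mul_atTop (by positivity)
    have : Tendsto (fun τ => exp (-2 * τ * δ) * ∫ t in Set.Icc 0 l, |q t|) atTop (𝓝 0) := by
      simpa [Function.comp_def, mul_comm, mul_left_comm] using
        (tendsto_exp_neg_atTop_nhds_zero.comp hlin).mul_const (∫ t in Set.Icc 0 l, |q t|)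
    exact this.eventually (ge_mem_nhds (half_pos hε))
  obtain ⟨τ₀, hτ₀⟩ := eventually_atTop.1 htail
  refine ⟨max τ₀ 1, lt_max_of_lt_right one_pos, fun τ hτ x hx => ?_⟩
  have hlocal_x : ∫ t in Set.Ioc (x - δ) x ∩ Set.Icc 0 l, |q t| ≤ ε / 2 := by
    rw [← Measure.restrict_restrict measurableSet_Ioc]
    refine hlocal _ ((Measure.restrict_apply_le _ _).trans ?_)
    rw [Real.volume_Ioc, sub_sub_cancel]
  have hτ_nonneg : 0 ≤ τ := zero_le_one.trans (le_of_max_le_right hτ)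
  calc _ ≤ _ := intervalIntegral_exp_mul_abs_le hq hx hτ_nonneg
    _ ≤ ε / 2 + ε / 2 := add_le_add hlocal_x (hτ₀ τ (le_of_max_le_left hτ))
    _ = ε := add_halves ε

/-- For `q` integrable on `[0, l]`, the quantity
`∫₀ˣ e^{-2τ(x-t)} |q(t)| dt` tends to `0` as `τ → +∞`, uniformly in `x ∈ [0, l]`. -/
theorem convolution_decay (l : ℝ) (hl : 0 < l) (q : ℝ → ℝ)
    (hq : IntegrableOn q (Set.Icc 0 l)) :
    ∀ ε > 0, ∃ τ₀ > 0, ∀ τ ≥ τ₀, ∀ x ∈ Set.Icc 0 l,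
      (∫ t in (0:ℝ)..x, Real.exp (-2 * τ * (x - t)) * |q t|) ≤ ε :=
  convolution_decay_general l q hq
end

section
/- Let n ≥ 2 be an integer. Suppose (h_τ)_{τ>0} is a family of measurable functions on [0, l] and ε : (0,∞) → ℝ satisfies ε(τ) → 0 as τ → +∞, such that for all sufficiently large τ and all t ∈ [0, l], |h_τ(t) − e^{τt} Σ_{j=1}^{n−1} Q(t)^{j−1}/((j−1)!(2τ)^{j})| ≤ ε(τ) e^{τt}/τ^{n−1}. Then there exists ε′ : (0,∞) → ℝ with ε′(τ) → 0 as τ → +∞ such that for all sufficiently large τ and all x ∈ [0, l], |∫₀ˣ e^{−τt} q(t) h_τ(t) dt − Σ_{j=1}^{n−1} Q(x)^{j}/(j!(2τ)^{j})| ≤ ε′(τ)/τ^{n−1}. -/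
/-!
The primitive `Q` of an integrable `q` is absolutely continuous with `Q' = q` almost everywhere,
so `∫₀ˣ q Q ^ j = Q x ^ (j + 1) / (j + 1)`. After the factor `e^{-τt}` cancels `e^{τt}`,
integrating `q` against the `j`-th term of the expansion of `h_τ` therefore produces the
`(j + 1)`-th term of the claimed sum, while the remainder contributes at most
`ε(τ) τ^{1-n} ∫₀ˡ |q|`.
-/

open Real MeasureTheory Filter Finset intervalIntegral

theorem AbsolutelyContinuousOnInterval.fun_pow {f : ℝ → ℝ} {a b : ℝ}
    (hf : AbsolutelyContinuousOnInterval f a b) (n : ℕ) :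
    AbsolutelyContinuousOnInterval (fun x => f x ^ n) a b := by
  induction n with
  | zero => simpa using (contDiffOn_const (c := (1 : ℝ)) (n := 1)).absolutelyContinuousOnInterval
  | succ n ih => simpa only [pow_succ] using ih.fun_mul hf

theorem integral_mul_primitive_pow {q : ℝ → ℝ} {a b : ℝ}
    (hq : IntervalIntegrable q volume a b) (j : ℕ) :
    ∫ t in a..b, q t * (∫ s in a..t, q s) ^ j = (∫ s in a..b, q s) ^ (j + 1) / (j + 1) := by
  have hQ := hq.absolutelyContinuousOnInterval_intervalIntegral (c := a) Set.left_mem_uIcc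
  have hderiv : ∀ᵐ t, t ∈ Set.uIoc a b → deriv (fun t => (∫ s in a..t, q s) ^ (j + 1)) t =
      (j + 1) * (q t * (∫ s in a..t, q s) ^ j) := by
    filter_upwards [hq.ae_hasDerivAt_integral] with t ht htab
    rw [((ht (Set.uIoc_subset_uIcc htab) a Set.left_mem_uIcc).fun_pow (j + 1)).deriv]
    push_cast
    ring
  have hftc := (hQ.fun_pow (j + 1)).integral_deriv_eq_sub
  rw [integral_congr_ae hderiv, intervalIntegral.integral_const_mul, integral_same,
    zero_pow j.succ_ne_zero, sub_zero] at hftc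
  rw [eq_div_iff (by positivity), ← hftc, mul_comm]

open Nat in
theorem integral_mul_sum_primitive_pow {q : ℝ → ℝ} {a b : ℝ}
    (hq : IntervalIntegrable q volume a b) (c : ℝ) (m : ℕ) :
    ∫ t in a..b, q t * ∑ j ∈ range m, (∫ s in a..t, q s) ^ j / (j ! * c ^ (j + 1)) =
      ∑ j ∈ Icc 1 m, (∫ s in a..b, q s) ^ j / (j ! * c ^ j) := by
  have hQ (j : ℕ) : ContinuousOn (fun t => (∫ s in a..t, q s) ^ j) (Set.uIcc a b) :=
    ((hq.absolutelyContinuousOnInterval_intervalIntegral Set.left_mem_uIcc).fun_pow j).continuousOn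
  simp_rw [Finset.mul_sum, mul_div_assoc']
  rw [intervalIntegral.integral_finsetSum fun j _ =>
    (hq.mul_continuousOn (hQ j)).div_const (j ! * c ^ (j + 1))]
  simp_rw [intervalIntegral.integral_div, integral_mul_primitive_pow hq]
  rw [← Finset.Ico_add_one_right_eq_Icc, Finset.sum_Ico_eq_sum_range, Nat.add_sub_cancel]
  refine Finset.sum_congr rfl fun j _ => ?_
  rw [add_comm 1 j, Nat.factorial_succ, div_div]
  push_cast
  ring

theorem abs_intervalIntegral_mul_le {q g : ℝ → ℝ} {a b M : ℝ} (hab : a ≤ b)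
    (hq : IntervalIntegrable q volume a b) (hg : ∀ t ∈ Set.Ioc a b, |g t| ≤ M) :
    |∫ t in a..b, q t * g t| ≤ M * ∫ t in a..b, |q t| := by
  calc |∫ t in a..b, q t * g t| ≤ ∫ t in a..b, |q t| * M :=
        intervalIntegral.norm_integral_le_of_norm_le hab (ae_of_all _ fun t ht => by
          rw [Real.norm_eq_abs, abs_mul]
          exact mul_le_mul_of_nonneg_left (hg t ht) (abs_nonneg _)) (hq.abs.mul_const M)
    _ = M * ∫ t in a..b, |q t| := by rw [intervalIntegral.integral_mul_const, mul_comm]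

theorem abs_integral_exp_mul_sub_integral_le {q f S : ℝ → ℝ} {a b τ δ : ℝ} (hab : a ≤ b)
    (hq : IntegrableOn q (Set.uIcc a b))
    (hf : AEStronglyMeasurable f (volume.restrict (Set.uIcc a b)))
    (hS : ContinuousOn S (Set.uIcc a b))
    (hfS : ∀ t ∈ Set.uIcc a b, |f t - exp (τ * t) * S t| ≤ δ * exp (τ * t)) :
    |(∫ t in a..b, exp (-τ * t) * q t * f t) - ∫ t in a..b, q t * S t| ≤
      δ * ∫ t in a..b, |q t| := by
  set g : ℝ → ℝ := fun t => exp (-τ * t) * (f t - exp (τ * t) * S t)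
  have hg : ∀ t ∈ Set.uIcc a b, |g t| ≤ δ := fun t ht => by
    calc |g t| = exp (-τ * t) * |f t - exp (τ * t) * S t| := by
          rw [abs_mul, abs_of_pos (exp_pos _)]
      _ ≤ exp (-τ * t) * (δ * exp (τ * t)) := by gcongr; exact hfS t ht
      _ = δ := by rw [neg_mul, exp_neg]; field_simp
  have hqg : IntegrableOn (fun t => q t * g t) (Set.uIcc a b) :=
    hq.mul_bdd (by have := hS.aestronglyMeasurable (μ := volume) measurableSet_uIcc; fun_prop)
      (ae_restrict_of_forall_mem measurableSet_uIcc hg)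
  have hsplit : (fun t => exp (-τ * t) * q t * f t) = fun t => q t * S t + q t * g t := by
    ext t
    simp only [g, neg_mul, exp_neg]
    field_simp
    ring
  rw [hsplit, intervalIntegral.integral_add (hq.intervalIntegrable.mul_continuousOn hS)
    hqg.intervalIntegrable, add_sub_cancel_left]
  exact abs_intervalIntegral_mul_le hab hq.intervalIntegrable fun t ht =>
    hg t (Set.Ioc_subset_Icc_self.trans Set.Icc_subset_uIcc ht)

theorem induction_step_general (l : ℝ) (q : ℝ → ℝ)
    (hq : IntegrableOn q (Set.Icc 0 l)) (n : ℕ)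
    (h : ℝ → ℝ → ℝ)
    (hmeas : ∀ τ > (0:ℝ), AEMeasurable (h τ) (volume.restrict (Set.Icc 0 l)))
    (ε : ℝ → ℝ) (hε : Tendsto ε atTop (nhds 0))
    (hexp : ∀ᶠ τ in atTop, ∀ t ∈ Set.Icc 0 l,
      |h τ t - Real.exp (τ * t) *
          ∑ j ∈ Finset.range (n - 1),
            (∫ s in (0:ℝ)..t, q s) ^ j / ((Nat.factorial j : ℝ) * (2 * τ) ^ (j + 1))| ≤
        ε τ * Real.exp (τ * t) / τ ^ (n - 1)) :
    ∃ ε' : ℝ → ℝ, Tendsto ε' atTop (nhds 0) ∧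
      ∀ᶠ τ in atTop, ∀ x ∈ Set.Icc 0 l,
        |(∫ t in (0:ℝ)..x, Real.exp (-τ * t) * q t * h τ t) -
            ∑ j ∈ Finset.Icc 1 (n - 1),
              (∫ t in (0:ℝ)..x, q t) ^ j / ((Nat.factorial j : ℝ) * (2 * τ) ^ j)| ≤
          ε' τ / τ ^ (n - 1) := by
  set C := ∫ t in Set.Icc 0 l, |q t|
  refine ⟨fun τ => |ε τ| * C, by simpa using hε.abs.mul_const C, ?_⟩
  filter_upwards [hexp, eventually_gt_atTop 0] with τ hτ hτ0 x hx
  have hsub : Set.uIcc 0 x ⊆ Set.Icc 0 l := by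
    rw [Set.uIcc_of_le hx.1]
    exact Set.Icc_subset_Icc_right hx.2
  have hqx : IntegrableOn q (Set.uIcc 0 x) := hq.mono_set hsub
  have hS : ContinuousOn (fun t => ∑ j ∈ Finset.range (n - 1),
      (∫ s in (0:ℝ)..t, q s) ^ j / ((Nat.factorial j : ℝ) * (2 * τ) ^ (j + 1))) (Set.uIcc 0 x) :=
    continuousOn_finsetSum _ fun j _ =>
      ((intervalIntegral.continuousOn_primitive_interval hqx).pow j).div_const _
  rw [← integral_mul_sum_primitive_pow hqx.intervalIntegrable]
  calc _ ≤ |ε τ| / τ ^ (n - 1) * ∫ t in 0..x, |q t| :=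
        abs_integral_exp_mul_sub_integral_le hx.1 hqx
          ((hmeas τ hτ0).mono_measure (Measure.restrict_mono hsub le_rfl)).aestronglyMeasurable hS
          fun t ht => (hτ t (hsub ht)).trans <| by
            rw [mul_div_right_comm]; gcongr; exact le_abs_self _
    _ ≤ |ε τ| / τ ^ (n - 1) * C := by
        gcongr
        rw [intervalIntegral.integral_of_le hx.1]
        exact setIntegral_mono_set hq.abs (ae_of_all _ fun t => abs_nonneg _)
          (Set.Ioc_subset_Icc_self.trans (Set.Icc_subset_Icc_right hx.2)).eventuallyLE
    _ = |ε τ| * C / τ ^ (n - 1) := by ring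

/-- The induction step in the derivation of the full asymptotic
expansion of `ψ_τ`. If `h_τ(t) = e^{τt} Σ_{j=1}^{n-1} Q(t)^{j-1}/((j-1)!(2τ)^j)
+ o(e^{τt}/τ^{n-1})` uniformly on `[0, l]`, then
`∫₀ˣ e^{-τt} q(t) h_τ(t) dt = Σ_{j=1}^{n-1} Q(x)^j/(j!(2τ)^j) + o(1/τ^{n-1})`
uniformly on `[0, l]`, where `Q(x) = ∫₀ˣ q(t) dt`. -/
theorem induction_step (l : ℝ) (hl : 0 < l) (q : ℝ → ℝ)
    (hq : IntegrableOn q (Set.Icc 0 l)) (n : ℕ) (hn : 2 ≤ n)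
    (h : ℝ → ℝ → ℝ)
    (hmeas : ∀ τ > (0:ℝ), AEMeasurable (h τ) (volume.restrict (Set.Icc 0 l)))
    (ε : ℝ → ℝ) (hε : Tendsto ε atTop (nhds 0))
    (hexp : ∀ᶠ τ in atTop, ∀ t ∈ Set.Icc 0 l,
      |h τ t - Real.exp (τ * t) *
          ∑ j ∈ Finset.range (n - 1),
            (∫ s in (0:ℝ)..t, q s) ^ j / ((Nat.factorial j : ℝ) * (2 * τ) ^ (j + 1))| ≤
        ε τ * Real.exp (τ * t) / τ ^ (n - 1)) :
    ∃ ε' : ℝ → ℝ, Tendsto ε' atTop (nhds 0) ∧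
      ∀ᶠ τ in atTop, ∀ x ∈ Set.Icc 0 l,
        |(∫ t in (0:ℝ)..x, Real.exp (-τ * t) * q t * h τ t) -
            ∑ j ∈ Finset.Icc 1 (n - 1),
              (∫ t in (0:ℝ)..x, q t) ^ j / ((Nat.factorial j : ℝ) * (2 * τ) ^ j)| ≤
          ε' τ / τ ^ (n - 1) :=
  induction_step_general l q hq n h hmeas ε hε hexp
end

section
/- Let m ≥ 1 be an integer, let g : ℝ → ℝ be m times continuously differentiable on [0, l], and fix x ∈ (0, l]. Then, as τ → +∞, ∫₀ˣ e^{2τt} g(t) dt = Σ_{k=0}^{m−1} (−1)^{k} g^{(k)}(x) e^{2τx}/(2τ)^{k+1} + r(τ), where τ^{m} e^{−2τx} r(τ) → 0 as τ → +∞ (i.e. the remainder is o(e^{2τx}/τ^{m})). -/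
open Real MeasureTheory Filter Finset intervalIntegral

/-!
Integrating by parts `m` times, differentiating `g` and integrating `e^{2τt}`, produces the
boundary terms at `x` displayed in the statement, boundary terms at `0` of size `O(τ^{-1})`,
and the remainder `(-1)^m (2τ)^{-m} ∫₀ˣ e^{2τt} g^{(m)}(t) dt`. After multiplication by
`τ^m e^{-2τx}`, the boundary terms at `0` are killed by `e^{-2τx}`, and the remainder becomes
`∫₀ˣ e^{2τ(t-x)} g^{(m)}(t) dt / (-2)^m`, which tends to `0` by dominated convergence.
-/

theorem integral_exp_mul_mul_eq {f f' : ℝ → ℝ} {a b c : ℝ} (hc : c ≠ 0)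
    (hf : ∀ t ∈ Set.uIcc a b, HasDerivWithinAt f (f' t) (Set.uIcc a b) t)
    (hf' : IntervalIntegrable f' volume a b) :
    ∫ t in a..b, exp (c * t) * f t =
      (f b * exp (c * b) - f a * exp (c * a)) / c - (∫ t in a..b, exp (c * t) * f' t) / c := by
  have hexp : ∀ t ∈ Set.uIcc a b,
      HasDerivWithinAt (fun t => exp (c * t) / c) (exp (c * t)) (Set.uIcc a b) t := fun t _ => by
    have := (((hasDerivAt_id t).const_mul c).exp).div_const c
    simp only [id, mul_one] at this
    rw [mul_div_cancel_right₀ _ hc] at this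
    exact this.hasDerivWithinAt
  have hibp := integral_mul_deriv_eq_deriv_mul_of_hasDerivWithinAt hf hexp hf'
    ((continuous_const_mul c).rexp.intervalIntegrable a b)
  simp_rw [mul_comm (exp _) (f _), mul_comm (exp _) (f' _), hibp, ← intervalIntegral.integral_div,
    mul_div_assoc]
  ring

theorem integral_exp_mul_mul_eq_sum_add {g : ℝ → ℝ} {s : Set ℝ} {a b c : ℝ} {n : ℕ}
    (hs : UniqueDiffOn ℝ s) (hab : Set.uIcc a b ⊆ s) (hc : c ≠ 0) (hg : ContDiffOn ℝ n g s) :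
    ∫ t in a..b, exp (c * t) * g t =
      ∑ k ∈ range n, (-1) ^ k * iteratedDerivWithin k g s b * exp (c * b) / c ^ (k + 1) -
        ∑ k ∈ range n, (-1) ^ k * iteratedDerivWithin k g s a * exp (c * a) / c ^ (k + 1) +
        (-1) ^ n / c ^ n * ∫ t in a..b, exp (c * t) * iteratedDerivWithin n g s t := by
  induction n with
  | zero => simp
  | succ n ih =>
    have hderiv : ∀ t ∈ Set.uIcc a b, HasDerivWithinAt (iteratedDerivWithin n g s)
        (iteratedDerivWithin (n + 1) g s t) (Set.uIcc a b) t := fun t ht => by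
      rw [iteratedDerivWithin_succ]
      exact ((hg.differentiableOn_iteratedDerivWithin (by norm_cast; omega) hs t
        (hab ht)).hasDerivWithinAt).mono hab
    have hint : IntervalIntegrable (iteratedDerivWithin (n + 1) g s) volume a b :=
      ((hg.continuousOn_iteratedDerivWithin le_rfl hs).mono hab).intervalIntegrable
    rw [ih (hg.of_le (by norm_cast; omega)), integral_exp_mul_mul_eq hc hderiv hint,
      sum_range_succ, sum_range_succ]
    ring

theorem tendsto_exp_neg_mul_integral_exp_mul {h : ℝ → ℝ} {a b : ℝ} (hab : a ≤ b)
    (hh : IntervalIntegrable h volume a b) :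
    Tendsto (fun c => exp (-(c * b)) * ∫ t in a..b, exp (c * t) * h t) atTop (nhds 0) := by
  have hlim : Tendsto (fun c => ∫ t in a..b, exp (c * (t - b)) * h t) atTop
      (nhds (∫ _ in a..b, (0 : ℝ))) := by
    refine tendsto_integral_filter_of_dominated_convergence (fun t => |h t|) ?_ ?_ hh.abs ?_
    · refine Eventually.of_forall fun c => ?_
      have hcont : Continuous fun t => exp (c * (t - b)) := by fun_prop
      exact hcont.aestronglyMeasurable.mul hh.def'.aestronglyMeasurable
    · filter_upwards [eventually_ge_atTop 0] with c hc
      refine Eventually.of_forall fun t ht => ?_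
      rw [Set.uIoc_of_le hab] at ht
      rw [norm_mul, norm_of_nonneg (exp_pos _).le, Real.norm_eq_abs]
      refine mul_le_of_le_one_left (abs_nonneg _) (exp_le_one_iff.2 ?_)
      exact mul_nonpos_of_nonneg_of_nonpos hc (sub_nonpos.2 ht.2)
    · filter_upwards [volume.ae_ne b] with t htb ht
      rw [Set.uIoc_of_le hab] at ht
      have hneg : t - b < 0 := sub_neg.2 (lt_of_le_of_ne ht.2 htb)
      simpa using ((tendsto_exp_atBot.comp
        (tendsto_id.atTop_mul_const_of_neg hneg)).mul_const (h t))
  rw [intervalIntegral.integral_zero] at hlim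
  refine hlim.congr fun c => ?_
  rw [← intervalIntegral.integral_const_mul]
  congr 1 with t
  rw [← mul_assoc, ← exp_add]
  ring_nf

theorem laplace_integration_by_parts_general (l : ℝ) (hl : 0 < l) (m : ℕ)
    (g : ℝ → ℝ) (hg : ContDiffOn ℝ m g (Set.Icc 0 l))
    (x : ℝ) (hx : x ∈ Set.Ioc 0 l) :
    Tendsto (fun τ : ℝ => τ ^ m * Real.exp (-2 * τ * x) *
      ((∫ t in (0:ℝ)..x, Real.exp (2 * τ * t) * g t) -
        ∑ k ∈ Finset.range m,
          (-1 : ℝ) ^ k * iteratedDerivWithin k g (Set.Icc 0 l) x *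
            Real.exp (2 * τ * x) / (2 * τ) ^ (k + 1)))
      atTop (nhds 0) := by
  have hs : UniqueDiffOn ℝ (Set.Icc 0 l) := uniqueDiffOn_Icc hl
  have hsub : Set.uIcc 0 x ⊆ Set.Icc 0 l := by
    rw [Set.uIcc_of_le hx.1.le]
    exact Set.Icc_subset_Icc_right hx.2
  have h2τ : Tendsto (fun τ : ℝ => 2 * τ) atTop atTop := tendsto_id.const_mul_atTop two_pos
  have hpow_exp : Tendsto (fun τ : ℝ => τ ^ m * exp (-2 * τ * x)) atTop (nhds 0) :=
    (tendsto_rpow_mul_exp_neg_mul_atTop_nhds_zero m (2 * x) (by linarith [hx.1])).congr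
      fun τ => by rw [rpow_natCast]; ring_nf
  have hinv (k : ℕ) : Tendsto (fun τ : ℝ => ((2 * τ) ^ (k + 1))⁻¹) atTop (nhds 0) :=
    ((tendsto_pow_atTop k.succ_ne_zero).comp h2τ).inv_tendsto_atTop
  have hremainder := (tendsto_exp_neg_mul_integral_exp_mul hx.1.le
    (((hg.continuousOn_iteratedDerivWithin le_rfl hs).mono hsub).intervalIntegrable)).comp h2τ
  have hboundary_zero := tendsto_finsetSum (range m) fun k _ =>
    (hpow_exp.mul (hinv k)).const_mul ((-1) ^ k * iteratedDerivWithin k g (Set.Icc 0 l) 0)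
  have hlim := (hremainder.const_mul ((-1) ^ m / 2 ^ m)).sub hboundary_zero
  simp only [mul_zero, sum_const_zero, sub_zero] at hlim
  refine hlim.congr' ?_
  filter_upwards [eventually_gt_atTop 0] with τ hτ
  rw [integral_exp_mul_mul_eq_sum_add hs hsub (by positivity) hg]
  simp only [mul_zero, exp_zero, mul_one, neg_mul, Function.comp_apply]
  rw [show ∀ a b c : ℝ, a - b + c - a = c - b by intros; ring, mul_sub, mul_sum]
  congr 1
  · rw [mul_pow]
    field_simp
  · exact sum_congr rfl fun k _ => by ring

/-- Watson-type lemma obtained by repeated integration by parts: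
for `g ∈ C^m([0, l])` and fixed `x ∈ (0, l]`,
`∫₀ˣ e^{2τt} g(t) dt = Σ_{k=0}^{m-1} (-1)^k g^{(k)}(x) e^{2τx}/(2τ)^{k+1} + o(e^{2τx}/τ^m)`
as `τ → +∞`. -/
theorem laplace_integration_by_parts (l : ℝ) (hl : 0 < l) (m : ℕ) (hm : 1 ≤ m)
    (g : ℝ → ℝ) (hg : ContDiffOn ℝ m g (Set.Icc 0 l))
    (x : ℝ) (hx : x ∈ Set.Ioc 0 l) :
    Tendsto (fun τ : ℝ => τ ^ m * Real.exp (-2 * τ * x) *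
      ((∫ t in (0:ℝ)..x, Real.exp (2 * τ * t) * g t) -
        ∑ k ∈ Finset.range m,
          (-1 : ℝ) ^ k * iteratedDerivWithin k g (Set.Icc 0 l) x *
            Real.exp (2 * τ * x) / (2 * τ) ^ (k + 1)))
      atTop (nhds 0) :=
  laplace_integration_by_parts_general l hl m g hg x hx
end

section
/- As τ → +∞ one has χ_τ(l) = (e^{τl}/2)(1 + Q(l)/(2τ)) + o(e^{τl}/τ); that is, τ e^{−τl} (χ_τ(l) − e^{τl}/2 − e^{τl} Q(l)/(4τ)) → 0 as τ → +∞. -/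
open Real MeasureTheory Filter intervalIntegral

/-!
Write `‖q‖₁ = ∫₀ˡ |q|`. The maximum `M` of `e^{-τx} |ψ_τ(x)|` on `[0, l]` satisfies
`M ≤ (1 + M ‖q‖₁) / (2τ)`, so `|ψ_τ(x)| ≤ e^{τx} / τ` once `τ ≥ ‖q‖₁`; feeding this back into
the equation gives `ψ_τ(x) = sinh (τx) / τ + O(e^{τx} / τ²)`. In `χ_τ(l)` the identity
`2 cosh (τ(l - t)) sinh (τt) = sinh (τl) - sinh (τ(l - 2t))` turns the main part of the integral into
`(sinh (τl) Q(l) - ∫₀ˡ sinh (τ(l - 2t)) q(t) dt) / (2τ)`, and the last integral is `o(e^{τl})` by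
dominated convergence, because `e^{-τl} sinh (τ(l - 2t)) → 0` for `0 < t < l`.
-/

theorem Real.abs_sinh_le_exp_div_two {y : ℝ} (hy : 0 ≤ y) : |sinh y| ≤ exp y / 2 := by
  rw [abs_of_nonneg (sinh_nonneg_iff.2 hy), sinh_eq]
  linarith [exp_pos (-y)]

theorem Real.cosh_le_exp_of_nonneg {y : ℝ} (hy : 0 ≤ y) : cosh y ≤ exp y := by
  rw [← cosh_add_sinh]
  linarith [sinh_nonneg_iff.2 hy]

theorem Real.two_mul_cosh_mul_sinh (x y : ℝ) :
    2 * cosh x * sinh y = sinh (x + y) - sinh (x - y) := by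
  rw [sinh_add, sinh_sub]
  ring

theorem abs_integral_mul_mul_le_of_exp_bounds {x τ c C : ℝ} {k q φ : ℝ → ℝ} (hx : 0 ≤ x)
    (hq : IntervalIntegrable q volume 0 x)
    (hk : ∀ t ∈ Set.Icc 0 x, |k t| ≤ c * exp (τ * (x - t)))
    (hφ : ∀ t ∈ Set.Icc 0 x, |φ t| ≤ C * exp (τ * t)) :
    |∫ t in (0:ℝ)..x, k t * q t * φ t| ≤ c * C * exp (τ * x) * ∫ t in (0:ℝ)..x, |q t| := by
  rw [← intervalIntegral.integral_const_mul, ← Real.norm_eq_abs]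
  refine norm_integral_le_of_norm_le hx (ae_of_all _ fun t ht => ?_) (hq.abs.const_mul _)
  have ht' : t ∈ Set.Icc 0 x := Set.Ioc_subset_Icc_self ht
  have hexp : exp (τ * (x - t)) * exp (τ * t) = exp (τ * x) := by
    rw [← exp_add]
    ring_nf
  calc ‖k t * q t * φ t‖ = |k t| * |φ t| * |q t| := by
        rw [Real.norm_eq_abs, abs_mul, abs_mul]
        ring
    _ ≤ c * exp (τ * (x - t)) * (C * exp (τ * t)) * |q t| :=
        mul_le_mul_of_nonneg_right
          (mul_le_mul (hk t ht') (hφ t ht') (abs_nonneg _) ((abs_nonneg _).trans (hk t ht')))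
          (abs_nonneg _)
    _ = c * C * exp (τ * x) * |q t| := by
        rw [← hexp]
        ring

section SinhVolterra

variable {l τ : ℝ} {q ψ : ℝ → ℝ}

theorem abs_sub_sinh_div_le_of_abs_le {M : ℝ} (hτ : 0 < τ) (hq : IntegrableOn q (Set.Icc 0 l))
    (hψ : ∀ x ∈ Set.Icc 0 l, ψ x = sinh (τ * x) / τ +
      (1 / τ) * ∫ t in (0:ℝ)..x, sinh (τ * (x - t)) * q t * ψ t)
    (hM : ∀ t ∈ Set.Icc 0 l, |ψ t| ≤ M * exp (τ * t)) {x : ℝ} (hx : x ∈ Set.Icc 0 l) :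
    |ψ x - sinh (τ * x) / τ| ≤ M * (∫ t in (0:ℝ)..l, |q t|) / (2 * τ) * exp (τ * x) := by
  have hl : (0:ℝ) ∈ Set.Icc 0 l := ⟨le_rfl, hx.1.trans hx.2⟩
  have hM0 : 0 ≤ M := nonneg_of_mul_nonneg_left ((abs_nonneg _).trans (hM x hx)) (exp_pos _)
  have hI := abs_integral_mul_mul_le_of_exp_bounds (c := 1 / 2) hx.1
    (hq.mono_set (Set.uIcc_subset_Icc hl hx)).intervalIntegrable
    (fun t ht => (abs_sinh_le_exp_div_two (mul_nonneg hτ.le (sub_nonneg.2 ht.2))).trans_eq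
      (by ring))
    (fun t ht => hM t ⟨ht.1, ht.2.trans hx.2⟩)
  have hA : ∫ t in (0:ℝ)..x, |q t| ≤ ∫ t in (0:ℝ)..l, |q t| :=
    integral_mono_interval le_rfl hx.1 hx.2 (ae_of_all _ fun t => abs_nonneg (q t))
      (hq.mono_set (Set.uIcc_subset_Icc hl ⟨hl.2, le_rfl⟩)).intervalIntegrable.abs
  rw [hψ x hx, add_sub_cancel_left, abs_mul, abs_of_pos (one_div_pos.2 hτ)]
  calc 1 / τ * |∫ t in (0:ℝ)..x, sinh (τ * (x - t)) * q t * ψ t|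
      ≤ 1 / τ * (1 / 2 * M * exp (τ * x) * ∫ t in (0:ℝ)..l, |q t|) := by
        gcongr
        exact hI.trans (by gcongr)
    _ = M * (∫ t in (0:ℝ)..l, |q t|) / (2 * τ) * exp (τ * x) := by ring

theorem abs_le_inv_mul_exp_of_sinh_volterra (hτ : 0 < τ) (hqτ : ∫ t in (0:ℝ)..l, |q t| ≤ τ)
    (hq : IntegrableOn q (Set.Icc 0 l)) (hψc : ContinuousOn ψ (Set.Icc 0 l))
    (hψ : ∀ x ∈ Set.Icc 0 l, ψ x = sinh (τ * x) / τ +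
      (1 / τ) * ∫ t in (0:ℝ)..x, sinh (τ * (x - t)) * q t * ψ t)
    {x : ℝ} (hx : x ∈ Set.Icc 0 l) :
    |ψ x| ≤ τ⁻¹ * exp (τ * x) := by
  obtain ⟨x₀, hx₀, hmax⟩ := isCompact_Icc.exists_isMaxOn ⟨x, hx⟩
    (((continuous_exp.comp (continuous_const.mul continuous_id).neg).continuousOn).mul hψc.abs)
  set M := exp (-(τ * x₀)) * |ψ x₀|
  have hM : ∀ t ∈ Set.Icc 0 l, |ψ t| ≤ M * exp (τ * t) := fun t ht =>
    calc |ψ t| = exp (-(τ * t)) * |ψ t| * exp (τ * t) := by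
          rw [mul_right_comm, ← exp_add, neg_add_cancel, exp_zero, one_mul]
      _ ≤ M * exp (τ * t) := mul_le_mul_of_nonneg_right (hmax ht) (exp_pos _).le
  -- One more pass through the equation gives `M ≤ (1 + M * ∫|q|) / (2τ) ≤ 1 / (2τ) + M / 2`.
  have hMτ : M ≤ τ⁻¹ := by
    have hsinh : |sinh (τ * x₀) / τ| ≤ 1 / (2 * τ) * exp (τ * x₀) := by
      rw [abs_div, abs_of_pos hτ, div_le_iff₀ hτ]
      exact (abs_sinh_le_exp_div_two (mul_nonneg hτ.le hx₀.1)).trans_eq (by field_simp)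
    have hrest := abs_sub_sinh_div_le_of_abs_le hτ hq hψ hM hx₀
    have hψ₀ : |ψ x₀| ≤ (1 + M * ∫ t in (0:ℝ)..l, |q t|) / (2 * τ) * exp (τ * x₀) :=
      calc |ψ x₀| ≤ |sinh (τ * x₀) / τ| + |ψ x₀ - sinh (τ * x₀) / τ| := by
            linarith [abs_sub_abs_le_abs_sub (ψ x₀) (sinh (τ * x₀) / τ)]
        _ ≤ _ := (add_le_add hsinh hrest).trans_eq (by ring)
    have hM0 : 0 ≤ M := by positivity
    have : M ≤ (1 + M * ∫ t in (0:ℝ)..l, |q t|) / (2 * τ) :=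
      calc M ≤ exp (-(τ * x₀)) * ((1 + M * ∫ t in (0:ℝ)..l, |q t|) / (2 * τ) * exp (τ * x₀)) :=
            mul_le_mul_of_nonneg_left hψ₀ (exp_pos _).le
        _ = _ := by rw [mul_left_comm, ← exp_add, neg_add_cancel, exp_zero, mul_one]
    rw [le_div_iff₀ (by positivity)] at this
    rw [← one_div, le_div_iff₀ hτ]
    nlinarith [mul_le_mul_of_nonneg_left hqτ hM0]
  exact (hM x hx).trans (mul_le_mul_of_nonneg_right hMτ (exp_pos _).le)

theorem abs_mul_exp_neg_mul_integral_cosh_mul_sub_le (hl : 0 ≤ l) (hτ : 0 < τ)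
    (hqτ : ∫ t in (0:ℝ)..l, |q t| ≤ τ) (hq : IntegrableOn q (Set.Icc 0 l))
    (hψc : ContinuousOn ψ (Set.Icc 0 l))
    (hψ : ∀ x ∈ Set.Icc 0 l, ψ x = sinh (τ * x) / τ +
      (1 / τ) * ∫ t in (0:ℝ)..x, sinh (τ * (x - t)) * q t * ψ t) :
    |τ * exp (-(τ * l)) * ∫ t in (0:ℝ)..l, cosh (τ * (l - t)) * q t * (ψ t - sinh (τ * t) / τ)|
      ≤ (∫ t in (0:ℝ)..l, |q t|) ^ 2 / (2 * τ) := by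
  have hI := abs_integral_mul_mul_le_of_exp_bounds (c := 1) hl
    (hq.mono_set (Set.uIcc_subset_Icc ⟨le_rfl, hl⟩ ⟨hl, le_rfl⟩)).intervalIntegrable
    (fun t ht => by
      rw [abs_of_pos (cosh_pos _), one_mul]
      exact cosh_le_exp_of_nonneg (mul_nonneg hτ.le (sub_nonneg.2 ht.2)))
    (fun t ht => abs_sub_sinh_div_le_of_abs_le hτ hq hψ
      (fun s hs => abs_le_inv_mul_exp_of_sinh_volterra hτ hqτ hq hψc hψ hs) ht)
  rw [abs_mul, abs_of_pos (by positivity)]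
  calc _ ≤ τ * exp (-(τ * l)) * (1 * (τ⁻¹ * (∫ t in (0:ℝ)..l, |q t|) / (2 * τ)) * exp (τ * l)
        * ∫ t in (0:ℝ)..l, |q t|) := by gcongr
    _ = (∫ t in (0:ℝ)..l, |q t|) ^ 2 / (2 * τ) := by
        rw [exp_neg]
        field_simp

end SinhVolterra

theorem integral_cosh_mul_mul_eq {l τ : ℝ} {q ψ : ℝ → ℝ} (hq : IntervalIntegrable q volume 0 l)
    (hψ : ContinuousOn ψ (Set.uIcc 0 l)) :
    ∫ t in (0:ℝ)..l, cosh (τ * (l - t)) * q t * ψ t =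
      (sinh (τ * l) * (∫ t in (0:ℝ)..l, q t) - ∫ t in (0:ℝ)..l, sinh (τ * (l - 2 * t)) * q t)
        / (2 * τ) + ∫ t in (0:ℝ)..l, cosh (τ * (l - t)) * q t * (ψ t - sinh (τ * t) / τ) := by
  have hk : IntervalIntegrable (fun t => cosh (τ * (l - t)) * q t) volume 0 l :=
    hq.continuousOn_mul (by fun_prop)
  have hsinh : ∀ t, cosh (τ * (l - t)) * q t * (sinh (τ * t) / τ) =
      (sinh (τ * l) * q t - sinh (τ * (l - 2 * t)) * q t) / (2 * τ) := fun t => by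
    have h := two_mul_cosh_mul_sinh (τ * (l - t)) (τ * t)
    rw [show τ * (l - t) + τ * t = τ * l by ring,
      show τ * (l - t) - τ * t = τ * (l - 2 * t) by ring] at h
    linear_combination q t / (2 * τ) * h
  have hsplit : ∀ t, cosh (τ * (l - t)) * q t * ψ t = cosh (τ * (l - t)) * q t * (sinh (τ * t) / τ)
      + cosh (τ * (l - t)) * q t * (ψ t - sinh (τ * t) / τ) := fun t => by ring
  simp only [hsplit]
  have hrest : IntervalIntegrable (fun t => cosh (τ * (l - t)) * q t * (ψ t - sinh (τ * t) / τ))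
      volume 0 l := hk.mul_continuousOn (hψ.sub (by fun_prop))
  rw [integral_add (hk.mul_continuousOn (g := fun t => sinh (τ * t) / τ) (by fun_prop)) hrest,
    integral_congr fun t _ => hsinh t, intervalIntegral.integral_div,
    integral_sub (hq.const_mul _) (hq.continuousOn_mul (by fun_prop)),
    intervalIntegral.integral_const_mul]

theorem mul_exp_neg_mul_sub_eq {τ l Q S E χ : ℝ} (hτ : τ ≠ 0)
    (hχ : χ = cosh (τ * l) + ((sinh (τ * l) * Q - S) / (2 * τ) + E)) :
    τ * exp (-(τ * l)) * (χ - exp (τ * l) / 2 - exp (τ * l) * Q / (4 * τ)) =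
      τ * exp (-(2 * l) * τ) / 2 - Q / 4 * exp (-(2 * l) * τ) - exp (-(τ * l)) * S / 2
        + τ * exp (-(τ * l)) * E := by
  rw [hχ, cosh_eq, sinh_eq, show -(2 * l) * τ = -(τ * l) + -(τ * l) by ring, exp_add, exp_neg]
  field_simp
  ring

theorem tendsto_setIntegral_exp_neg_mul_mul_atTop {α : Type*} [MeasurableSpace α] {μ : Measure α}
    {s : Set α} {a q : α → ℝ} (ha_meas : AEStronglyMeasurable a (μ.restrict s))
    (ha : ∀ᵐ t ∂μ.restrict s, 0 < a t) (hq : IntegrableOn q s μ) :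
    Tendsto (fun τ : ℝ => ∫ t in s, exp (-(τ * a t)) * q t ∂μ) atTop (nhds 0) := by
  have hmeas : ∀ τ : ℝ, AEStronglyMeasurable (fun t => exp (-(τ * a t)) * q t) (μ.restrict s) :=
    fun τ => (continuous_exp.comp_aestronglyMeasurable (ha_meas.const_mul τ).neg).mul
      hq.aestronglyMeasurable
  have hbound : ∀ᶠ τ : ℝ in atTop, ∀ᵐ t ∂μ.restrict s, ‖exp (-(τ * a t)) * q t‖ ≤ |q t| := by
    filter_upwards [eventually_ge_atTop 0] with τ hτ
    filter_upwards [ha] with t ht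
    rw [norm_mul, Real.norm_eq_abs, abs_of_pos (exp_pos _)]
    exact mul_le_of_le_one_left (abs_nonneg _)
      (exp_le_one_iff.2 (neg_nonpos.2 (mul_nonneg hτ ht.le)))
  have hlim : ∀ᵐ t ∂μ.restrict s, Tendsto (fun τ : ℝ => exp (-(τ * a t)) * q t) atTop (nhds 0) := by
    filter_upwards [ha] with t ht
    simpa using ((tendsto_exp_atBot.comp
      (tendsto_neg_atTop_atBot.comp (tendsto_id.atTop_mul_const ht))).mul_const (q t))
  simpa using tendsto_integral_filter_of_dominated_convergence _ (Eventually.of_forall hmeas)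
    hbound hq.abs hlim

theorem tendsto_exp_neg_mul_integral_sinh_mul_atTop {l : ℝ} {q : ℝ → ℝ} (hl : 0 ≤ l)
    (hq : IntervalIntegrable q volume 0 l) :
    Tendsto (fun τ : ℝ => exp (-(τ * l)) * ∫ t in (0:ℝ)..l, sinh (τ * (l - 2 * t)) * q t)
      atTop (nhds 0) := by
  have hqs : IntegrableOn q (Set.Ioo 0 l) := (intervalIntegrable_iff_integrableOn_Ioo_of_le hl).1 hq
  have hpos : ∀ a : ℝ → ℝ, (∀ t ∈ Set.Ioo 0 l, 0 < a t) →
      ∀ᵐ t ∂volume.restrict (Set.Ioo 0 l), 0 < a t := fun a ha =>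
    ae_restrict_of_forall_mem measurableSet_Ioo ha
  have h₁ := tendsto_setIntegral_exp_neg_mul_mul_atTop (a := fun t => 2 * t)
    (by fun_prop) (hpos _ fun t ht => by linarith [ht.1]) hqs
  have h₂ := tendsto_setIntegral_exp_neg_mul_mul_atTop (a := fun t => 2 * (l - t))
    (by fun_prop) (hpos _ fun t ht => by linarith [ht.2]) hqs
  have h := (h₁.sub h₂).div_const 2
  rw [sub_zero, zero_div] at h
  refine h.congr fun τ => ?_
  simp only [← integral_Ioc_eq_integral_Ioo, ← integral_of_le hl]
  rw [← intervalIntegral.integral_sub (hq.continuousOn_mul (by fun_prop))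
    (hq.continuousOn_mul (by fun_prop)), ← intervalIntegral.integral_div,
    ← intervalIntegral.integral_const_mul]
  refine integral_congr fun t _ => ?_
  have e₁ : exp (-(τ * l)) * exp (τ * (l - 2 * t)) = exp (-(τ * (2 * t))) := by
    rw [← exp_add]; ring_nf
  have e₂ : exp (-(τ * l)) * exp (-(τ * (l - 2 * t))) = exp (-(τ * (2 * (l - t)))) := by
    rw [← exp_add]; ring_nf
  simp only [sinh_eq]
  linear_combination (q t / 2) * (e₂ - e₁)

/-- Two-term asymptotics of `χ_τ(l) = ψ_τ'(l)` for integrable `q`: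
`χ_τ(l) = (e^{τl}/2)(1 + Q(l)/(2τ)) + o(e^{τl}/τ)` as `τ → +∞`,
where `Q(l) = ∫₀ˡ q(t) dt`. -/
theorem psi_prime_endpoint_two_terms (l : ℝ) (hl : 0 < l) (q : ℝ → ℝ)
    (hq : IntegrableOn q (Set.Icc 0 l)) (ψ χ : ℝ → ℝ → ℝ)
    (hψcont : ∀ τ > (0:ℝ), ContinuousOn (ψ τ) (Set.Icc 0 l))
    (hψ : ∀ τ > (0:ℝ), ∀ x ∈ Set.Icc 0 l,
      ψ τ x = Real.sinh (τ * x) / τ +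
        (1 / τ) * ∫ t in (0:ℝ)..x, Real.sinh (τ * (x - t)) * q t * ψ τ t)
    (hχ : ∀ τ > (0:ℝ), ∀ x ∈ Set.Icc 0 l,
      χ τ x = Real.cosh (τ * x) +
        ∫ t in (0:ℝ)..x, Real.cosh (τ * (x - t)) * q t * ψ τ t) :
    Tendsto (fun τ : ℝ => τ * Real.exp (-(τ * l)) *
      (χ τ l - Real.exp (τ * l) / 2 -
        Real.exp (τ * l) * (∫ t in (0:ℝ)..l, q t) / (4 * τ)))
      atTop (nhds 0) := by
  have hIcc : Set.uIcc 0 l ⊆ Set.Icc 0 l := Set.uIcc_subset_Icc ⟨le_rfl, hl.le⟩ ⟨hl.le, le_rfl⟩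
  have hqI : IntervalIntegrable q volume 0 l := (hq.mono_set hIcc).intervalIntegrable
  have hE : Tendsto (fun τ => τ * exp (-(τ * l)) *
      ∫ t in (0:ℝ)..l, cosh (τ * (l - t)) * q t * (ψ τ t - sinh (τ * t) / τ)) atTop (nhds 0) := by
    have hbound := tendsto_inv_atTop_zero.const_mul ((∫ t in (0:ℝ)..l, |q t|) ^ 2 / 2)
    rw [mul_zero] at hbound
    refine squeeze_zero_norm' ?_ hbound
    filter_upwards [eventually_gt_atTop 0, eventually_ge_atTop (∫ t in (0:ℝ)..l, |q t|)]
      with τ hτ hqτ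
    exact (abs_mul_exp_neg_mul_integral_cosh_mul_sub_le hl.le hτ hqτ hq (hψcont τ hτ)
      (hψ τ hτ)).trans_eq (by ring)
  have h₁ := tendsto_rpow_mul_exp_neg_mul_atTop_nhds_zero 1 (2 * l) (by positivity)
  have h₀ := tendsto_rpow_mul_exp_neg_mul_atTop_nhds_zero 0 (2 * l) (by positivity)
  simp only [rpow_one, rpow_zero, one_mul] at h₁ h₀
  have hsum := (((h₁.div_const 2).sub (h₀.const_mul ((∫ t in (0:ℝ)..l, q t) / 4))).sub
    ((tendsto_exp_neg_mul_integral_sinh_mul_atTop hl.le hqI).div_const 2)).add hE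
  simp only [zero_div, mul_zero, sub_zero, add_zero] at hsum
  refine hsum.congr' ?_
  filter_upwards [eventually_gt_atTop 0] with τ hτ
  refine (mul_exp_neg_mul_sub_eq hτ.ne' ?_).symm
  rw [hχ τ hτ l ⟨hl.le, le_rfl⟩, integral_cosh_mul_mul_eq hqI ((hψcont τ hτ).mono hIcc)]
end

section
/- There exists τ₀ > 0 such that φ_τ(0) ≠ 0 for all τ ≥ τ₀, and η_τ(0)/φ_τ(0) + τ → 0 as τ → +∞; that is, η_τ(0)/φ_τ(0) = −τ + o(1) as τ → +∞. -/
/-!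
Normalize by the growth `e^{τ(l-x)}` of the unperturbed solution. A maximum argument for
`x ↦ e^{τ(x-l)} |φ_τ x|` in the Volterra equation gives `|φ_τ x| ≤ e^{τ(l-x)} / τ` as soon as
`τ ≥ ∫ |q|`. With this bound, `τ e^{-τl} φ_τ 0 = -1/2 + O(e^{-2τl} + 1/τ)`, while
`cosh + sinh = exp` turns `τ e^{-τl} (η_τ 0 + τ φ_τ 0)` into `τ e^{-2τl} - ∫ τ e^{-τ(l+t)} q φ_τ`,
which is at most `τ e^{-2τl} + ∫ e^{-2τt} |q|` and tends to `0` by dominated convergence. The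
quotient of these two quantities is `η_τ 0 / φ_τ 0 + τ`.
-/

open Real MeasureTheory Filter intervalIntegral Set Topology

lemma abs_sinh_le_exp_neg_div_two {y : ℝ} (hy : y ≤ 0) : |sinh y| ≤ exp (-y) / 2 := by
  rw [abs_of_nonpos (sinh_nonpos_iff.mpr hy), sinh_eq]
  linarith [exp_pos y]

lemma intervalIntegrable_mul_mul_of_continuousOn {a b : ℝ} {u q v : ℝ → ℝ} (hab : a ≤ b)
    (hq : IntegrableOn q (Icc a b)) (hu : ContinuousOn u (Icc a b))
    (hv : ContinuousOn v (Icc a b)) :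
    IntervalIntegrable (fun t => u t * q t * v t) volume a b := by
  rw [intervalIntegrable_iff_integrableOn_Icc_of_le hab]
  refine (hq.continuousOn_mul (hu.mul hv) isCompact_Icc).congr_fun (fun t _ => ?_) measurableSet_Icc
  simp only [Pi.mul_apply]
  ring

lemma abs_integral_mul_mul_le {a b : ℝ} {u q v w : ℝ → ℝ} (hab : a ≤ b)
    (hq : IntegrableOn q (Icc a b)) (hw : ContinuousOn w (Icc a b))
    (huv : ∀ t ∈ Icc a b, |u t * v t| ≤ w t) :
    |∫ t in a..b, u t * q t * v t| ≤ ∫ t in a..b, w t * |q t| := by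
  rw [← norm_eq_abs]
  refine norm_integral_le_of_norm_le hab (ae_of_all _ fun t ht => ?_) ?_
  · rw [norm_eq_abs, mul_right_comm, abs_mul]
    exact mul_le_mul_of_nonneg_right (huv t (Ioc_subset_Icc_self ht)) (abs_nonneg _)
  · rw [intervalIntegrable_iff_integrableOn_Icc_of_le hab]
    exact IntegrableOn.continuousOn_mul hw hq.abs isCompact_Icc

lemma abs_integral_mul_mul_le_const {a b C : ℝ} {u q v : ℝ → ℝ} (hab : a ≤ b)
    (hq : IntegrableOn q (Icc a b)) (huv : ∀ t ∈ Icc a b, |u t * v t| ≤ C) :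
    |∫ t in a..b, u t * q t * v t| ≤ C * ∫ t in a..b, |q t| := by
  rw [← intervalIntegral.integral_const_mul]
  exact abs_integral_mul_mul_le hab hq continuousOn_const huv

lemma tendsto_integral_exp_neg_mul_mul {l : ℝ} {f : ℝ → ℝ} (hl : 0 ≤ l)
    (hf : IntervalIntegrable f volume 0 l) :
    Tendsto (fun τ => ∫ t in 0..l, exp (-τ * t) * f t) atTop (𝓝 0) := by
  have hlim := tendsto_integral_filter_of_dominated_convergence (l := atTop)
    (F := fun τ t => exp (-τ * t) * f t) (f := fun _ => 0) (fun t => |f t|)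
    (Eventually.of_forall fun τ => ((continuous_exp.comp (by fun_prop)).aestronglyMeasurable).mul
      hf.def'.aestronglyMeasurable) ?_ hf.abs ?_
  · simpa using hlim
  · filter_upwards [eventually_ge_atTop 0] with τ hτ
    refine ae_of_all _ fun t ht => ?_
    rw [uIoc_of_le hl] at ht
    rw [norm_mul, norm_eq_abs, abs_exp, norm_eq_abs]
    exact mul_le_of_le_one_left (abs_nonneg _) (exp_le_one_iff.mpr (by nlinarith [ht.1]))
  · refine ae_of_all _ fun t ht => ?_
    rw [uIoc_of_le hl] at ht
    simpa using
      (tendsto_exp_atBot.comp (tendsto_neg_atTop_atBot.atBot_mul_const ht.1)).mul_const (f t)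

def SolvesSinhVolterra (l τ : ℝ) (q φ : ℝ → ℝ) : Prop :=
  ∀ x ∈ Icc 0 l, φ x = sinh (τ * (x - l)) / τ -
    (1 / τ) * ∫ t in x..l, sinh (τ * (x - t)) * q t * φ t

section VolterraEstimates

variable {l τ : ℝ} {q φ : ℝ → ℝ}

lemma SolvesSinhVolterra.mul_abs_le (hφ : SolvesSinhVolterra l τ q φ) (hτ : 0 < τ)
    (hq : IntegrableOn q (Icc 0 l)) {x S : ℝ} (hx : x ∈ Icc 0 l)
    (hS : ∀ t ∈ Icc x l, |φ t| ≤ S * exp (τ * (l - t))) :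
    τ * |φ x| ≤ exp (τ * (l - x)) * (1 + S * ∫ t in x..l, |q t|) / 2 := by
  have hI : |∫ t in x..l, sinh (τ * (x - t)) * q t * φ t| ≤
      exp (τ * (l - x)) * S / 2 * ∫ t in x..l, |q t| := by
    refine abs_integral_mul_mul_le_const hx.2 (hq.mono_set (Icc_subset_Icc_left hx.1))
      fun t ht => ?_
    rw [abs_mul]
    calc |sinh (τ * (x - t))| * |φ t|
        ≤ exp (-(τ * (x - t))) / 2 * (S * exp (τ * (l - t))) := by
          gcongr
          · exact abs_sinh_le_exp_neg_div_two (by nlinarith [ht.1])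
          · exact hS t ht
      _ = exp (τ * (l - x)) * S / 2 := by
          rw [show τ * (l - x) = -(τ * (x - t)) + τ * (l - t) by ring, exp_add]; ring
  have hτφ : τ * φ x = sinh (τ * (x - l)) - ∫ t in x..l, sinh (τ * (x - t)) * q t * φ t := by
    rw [hφ x hx]; field_simp
  rw [show τ * |φ x| = |τ * φ x| by rw [abs_mul, abs_of_pos hτ], hτφ]
  calc _ ≤ |sinh (τ * (x - l))| + |∫ t in x..l, sinh (τ * (x - t)) * q t * φ t| := abs_sub _ _
    _ ≤ exp (-(τ * (x - l))) / 2 + exp (τ * (l - x)) * S / 2 * ∫ t in x..l, |q t| := by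
        gcongr
        exact abs_sinh_le_exp_neg_div_two (by nlinarith [hx.2])
    _ = exp (τ * (l - x)) * (1 + S * ∫ t in x..l, |q t|) / 2 := by
        rw [show -(τ * (x - l)) = τ * (l - x) by ring]; ring

lemma SolvesSinhVolterra.abs_le_exp_div (hφ : SolvesSinhVolterra l τ q φ) (hτ : 0 < τ)
    (hq : IntegrableOn q (Icc 0 l)) (hQ : ∫ t in 0..l, |q t| ≤ τ)
    (hφc : ContinuousOn φ (Icc 0 l)) : ∀ x ∈ Icc 0 l, |φ x| ≤ exp (τ * (l - x)) / τ := by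
  intro x hx
  obtain ⟨x₀, hx₀, hmax⟩ := isCompact_Icc.exists_isMaxOn ⟨x, hx⟩
    ((continuous_exp.comp (by fun_prop)).continuousOn.mul hφc.abs :
      ContinuousOn (fun t => exp (τ * (t - l)) * |φ t|) (Icc 0 l))
  set S := exp (τ * (x₀ - l)) * |φ x₀|
  have hφS : ∀ t ∈ Icc 0 l, |φ t| ≤ S * exp (τ * (l - t)) := fun t ht => by
    have := mul_le_mul_of_nonneg_right (show exp (τ * (t - l)) * |φ t| ≤ S from hmax ht)
      (exp_pos (τ * (l - t))).le
    rwa [mul_right_comm, ← exp_add, show τ * (t - l) + τ * (l - t) = 0 by ring, exp_zero,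
      one_mul] at this
  have hQx₀ : ∫ t in x₀..l, |q t| ≤ τ :=
    (integral_mono_interval hx₀.1 hx₀.2 le_rfl (ae_of_all _ fun t => abs_nonneg _)
      ((intervalIntegrable_iff_integrableOn_Icc_of_le (hx₀.1.trans hx₀.2)).mpr hq.abs)).trans hQ
  have hτφ := hφ.mul_abs_le hτ hq hx₀ fun t ht => hφS t ⟨hx₀.1.trans ht.1, ht.2⟩
  have hτS : τ * S ≤ 1 := by
    have hexp : exp (τ * (x₀ - l)) * exp (τ * (l - x₀)) = 1 := by
      rw [← exp_add, show τ * (x₀ - l) + τ * (l - x₀) = 0 by ring, exp_zero]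
    have : τ * S ≤ (1 + τ * S) / 2 :=
      calc τ * S = exp (τ * (x₀ - l)) * (τ * |φ x₀|) := by ring
        _ ≤ exp (τ * (x₀ - l)) * (exp (τ * (l - x₀)) * (1 + S * τ) / 2) := by
          gcongr
          exact hτφ.trans (by gcongr)
        _ = (1 + τ * S) / 2 := by rw [← mul_div_assoc, ← mul_assoc, hexp, one_mul, mul_comm S]
    linarith
  calc |φ x| ≤ S * exp (τ * (l - x)) := hφS x hx
    _ ≤ 1 / τ * exp (τ * (l - x)) := by gcongr; rwa [le_div_iff₀' hτ]
    _ = exp (τ * (l - x)) / τ := by ring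

lemma SolvesSinhVolterra.abs_mul_exp_mul_add_half_le (hφ : SolvesSinhVolterra l τ q φ)
    (hτ : 0 < τ) (hl : 0 ≤ l) (hq : IntegrableOn q (Icc 0 l))
    (hb : ∀ t ∈ Icc 0 l, |φ t| ≤ exp (τ * (l - t)) / τ) :
    |τ * exp (-(τ * l)) * φ 0 + 1 / 2| ≤
      exp (-(2 * l) * τ) / 2 + (∫ t in 0..l, |q t|) / (2 * τ) := by
  have hexp : exp (-(τ * l)) * exp (τ * l) = 1 := by rw [← exp_add, neg_add_cancel, exp_zero]
  have hI : |∫ t in 0..l, sinh (τ * (0 - t)) * q t * φ t| ≤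
      exp (τ * l) / (2 * τ) * ∫ t in 0..l, |q t| := by
    refine abs_integral_mul_mul_le_const hl hq fun t ht => ?_
    rw [abs_mul]
    calc |sinh (τ * (0 - t))| * |φ t|
        ≤ exp (-(τ * (0 - t))) / 2 * (exp (τ * (l - t)) / τ) := by
          gcongr
          · exact abs_sinh_le_exp_neg_div_two (by nlinarith [ht.1])
          · exact hb t ht
      _ = exp (τ * l) / (2 * τ) := by
          rw [show τ * l = -(τ * (0 - t)) + τ * (l - t) by ring, exp_add]; field_simp
  have hsplit : τ * exp (-(τ * l)) * φ 0 + 1 / 2 = exp (-(2 * l) * τ) / 2 -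
      exp (-(τ * l)) * ∫ t in 0..l, sinh (τ * (0 - t)) * q t * φ t := by
    rw [hφ 0 ⟨le_rfl, hl⟩, sinh_eq, show -(2 * l) * τ = -(τ * l) + τ * (0 - l) by ring, exp_add,
      show -(τ * (0 - l)) = τ * l by ring]
    field_simp
    linear_combination -hexp
  rw [hsplit]
  calc _ ≤ |exp (-(2 * l) * τ) / 2| +
        |exp (-(τ * l)) * ∫ t in 0..l, sinh (τ * (0 - t)) * q t * φ t| := abs_sub _ _
    _ ≤ exp (-(2 * l) * τ) / 2 +
        exp (-(τ * l)) * (exp (τ * l) / (2 * τ) * ∫ t in 0..l, |q t|) := by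
        rw [abs_of_pos (by positivity), abs_mul, abs_of_pos (exp_pos _)]
        gcongr
    _ = exp (-(2 * l) * τ) / 2 + (∫ t in 0..l, |q t|) / (2 * τ) := by
        rw [← mul_assoc, mul_div_assoc', hexp]; ring

lemma SolvesSinhVolterra.add_mul_apply_zero_eq {d : ℝ} (hφ : SolvesSinhVolterra l τ q φ)
    (hτ : 0 < τ) (hl : 0 ≤ l) (hq : IntegrableOn q (Icc 0 l)) (hφc : ContinuousOn φ (Icc 0 l))
    (hd : d = cosh (τ * (0 - l)) - ∫ t in 0..l, cosh (τ * (0 - t)) * q t * φ t) :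
    d + τ * φ 0 = exp (τ * (0 - l)) - ∫ t in 0..l, exp (τ * (0 - t)) * q t * φ t := by
  have hint : ∀ u : ℝ → ℝ, Continuous u →
      IntervalIntegrable (fun t => u t * q t * φ t) volume 0 l := fun u hu =>
    intervalIntegrable_mul_mul_of_continuousOn hl hq hu.continuousOn hφc
  have hexp_int : ∫ t in 0..l, exp (τ * (0 - t)) * q t * φ t =
      (∫ t in 0..l, cosh (τ * (0 - t)) * q t * φ t) +
        ∫ t in 0..l, sinh (τ * (0 - t)) * q t * φ t := by
    rw [← integral_add (hint _ (by fun_prop)) (hint _ (by fun_prop))]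
    refine integral_congr fun t _ => ?_
    simp only [← cosh_add_sinh]; ring
  rw [hd, hφ 0 ⟨le_rfl, hl⟩, hexp_int, ← cosh_add_sinh]
  field_simp
  ring

lemma SolvesSinhVolterra.abs_mul_exp_mul_add_mul_le {d : ℝ} (hφ : SolvesSinhVolterra l τ q φ)
    (hτ : 0 < τ) (hl : 0 ≤ l) (hq : IntegrableOn q (Icc 0 l)) (hφc : ContinuousOn φ (Icc 0 l))
    (hb : ∀ t ∈ Icc 0 l, |φ t| ≤ exp (τ * (l - t)) / τ)
    (hd : d = cosh (τ * (0 - l)) - ∫ t in 0..l, cosh (τ * (0 - t)) * q t * φ t) :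
    |τ * exp (-(τ * l)) * (d + τ * φ 0)| ≤
      τ * exp (-(2 * l) * τ) + ∫ t in 0..l, exp (-(2 * τ) * t) * |q t| := by
  have hpull : τ * exp (-(τ * l)) * ∫ t in 0..l, exp (τ * (0 - t)) * q t * φ t =
      ∫ t in 0..l, (τ * exp (-(τ * l)) * exp (τ * (0 - t))) * q t * φ t := by
    rw [← intervalIntegral.integral_const_mul]
    simp only [mul_assoc]
  have hI : |∫ t in 0..l, (τ * exp (-(τ * l)) * exp (τ * (0 - t))) * q t * φ t| ≤
      ∫ t in 0..l, exp (-(2 * τ) * t) * |q t| := by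
    refine abs_integral_mul_mul_le hl hq (by fun_prop) fun t ht => ?_
    rw [abs_mul, abs_of_pos (by positivity)]
    calc τ * exp (-(τ * l)) * exp (τ * (0 - t)) * |φ t|
        ≤ τ * exp (-(τ * l)) * exp (τ * (0 - t)) * (exp (τ * (l - t)) / τ) := by
          gcongr; exact hb t ht
      _ = exp (-(2 * τ) * t) := by
          rw [show -(2 * τ) * t = -(τ * l) + τ * (0 - t) + τ * (l - t) by ring, exp_add,
            exp_add]
          field_simp
  rw [hφ.add_mul_apply_zero_eq hτ hl hq hφc hd, mul_sub, hpull]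
  calc _ ≤ |τ * exp (-(τ * l)) * exp (τ * (0 - l))| +
        |∫ t in 0..l, (τ * exp (-(τ * l)) * exp (τ * (0 - t))) * q t * φ t| := abs_sub _ _
    _ ≤ τ * exp (-(2 * l) * τ) + ∫ t in 0..l, exp (-(2 * τ) * t) * |q t| := by
        rw [abs_of_pos (by positivity), mul_assoc, ← exp_add,
          show -(τ * l) + τ * (0 - l) = -(2 * l) * τ by ring]
        gcongr

end VolterraEstimates

section Asymptotics

variable {l : ℝ} {q : ℝ → ℝ} {φ : ℝ → ℝ → ℝ}

lemma eventually_abs_le_exp_div (hq : IntegrableOn q (Icc 0 l))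
    (hφc : ∀ τ > 0, ContinuousOn (φ τ) (Icc 0 l)) (hφ : ∀ τ > 0, SolvesSinhVolterra l τ q (φ τ)) :
    ∀ᶠ τ in atTop, 0 < τ ∧ ∀ x ∈ Icc 0 l, |φ τ x| ≤ exp (τ * (l - x)) / τ := by
  filter_upwards [eventually_gt_atTop 0, eventually_ge_atTop (∫ t in 0..l, |q t|)] with τ hτ hQ
  exact ⟨hτ, (hφ τ hτ).abs_le_exp_div hτ hq hQ (hφc τ hτ)⟩

lemma tendsto_mul_exp_mul_apply_zero (hl : 0 < l) (hq : IntegrableOn q (Icc 0 l))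
    (hφc : ∀ τ > 0, ContinuousOn (φ τ) (Icc 0 l)) (hφ : ∀ τ > 0, SolvesSinhVolterra l τ q (φ τ)) :
    Tendsto (fun τ => τ * exp (-(τ * l)) * φ τ 0) atTop (𝓝 (-(1 / 2))) := by
  have hbound : Tendsto (fun τ => exp (-(2 * l) * τ) / 2 + (∫ t in 0..l, |q t|) / (2 * τ))
      atTop (𝓝 0) := by
    simpa using
      ((tendsto_rpow_mul_exp_neg_mul_atTop_nhds_zero 0 (2 * l) (by positivity)).div_const 2).add
      (tendsto_const_nhds.div_atTop (tendsto_id.const_mul_atTop two_pos))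
  rw [← tendsto_sub_nhds_zero_iff]
  refine squeeze_zero_norm' ?_ hbound
  filter_upwards [eventually_abs_le_exp_div hq hφc hφ] with τ ⟨hτ, hb⟩
  simpa [sub_neg_eq_add] using (hφ τ hτ).abs_mul_exp_mul_add_half_le hτ hl.le hq hb

lemma tendsto_mul_exp_mul_add_mul_apply_zero {η : ℝ → ℝ → ℝ} (hl : 0 < l)
    (hq : IntegrableOn q (Icc 0 l)) (hφc : ∀ τ > 0, ContinuousOn (φ τ) (Icc 0 l))
    (hφ : ∀ τ > 0, SolvesSinhVolterra l τ q (φ τ))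
    (hη : ∀ τ > 0, η τ 0 = cosh (τ * (0 - l)) - ∫ t in 0..l, cosh (τ * (0 - t)) * q t * φ τ t) :
    Tendsto (fun τ => τ * exp (-(τ * l)) * (η τ 0 + τ * φ τ 0)) atTop (𝓝 0) := by
  have hbound : Tendsto
      (fun τ => τ * exp (-(2 * l) * τ) + ∫ t in 0..l, exp (-(2 * τ) * t) * |q t|)
      atTop (𝓝 0) := by
    simpa using (tendsto_rpow_mul_exp_neg_mul_atTop_nhds_zero 1 (2 * l) (by positivity)).add
      ((tendsto_integral_exp_neg_mul_mul hl.le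
        ((intervalIntegrable_iff_integrableOn_Icc_of_le hl.le).mpr hq.abs)).comp
        (tendsto_id.const_mul_atTop two_pos))
  refine squeeze_zero_norm' ?_ hbound
  filter_upwards [eventually_abs_le_exp_div hq hφc hφ] with τ ⟨hτ, hb⟩
  exact (hφ τ hτ).abs_mul_exp_mul_add_mul_le hτ hl.le hq (hφc τ hτ) hb (hη τ hτ)

end Asymptotics

/-- For large `τ`, `φ_τ(0) ≠ 0` and the logarithmic derivative at
the left endpoint satisfies `η_τ(0)/φ_τ(0) = -τ + o(1)` as `τ → +∞`. -/
theorem log_derivative_asymptotics_left (l : ℝ) (hl : 0 < l) (q : ℝ → ℝ)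
    (hq : IntegrableOn q (Set.Icc 0 l)) (φ η : ℝ → ℝ → ℝ)
    (hφcont : ∀ τ > (0:ℝ), ContinuousOn (φ τ) (Set.Icc 0 l))
    (hφ : ∀ τ > (0:ℝ), ∀ x ∈ Set.Icc 0 l,
      φ τ x = Real.sinh (τ * (x - l)) / τ -
        (1 / τ) * ∫ t in x..l, Real.sinh (τ * (x - t)) * q t * φ τ t)
    (hη : ∀ τ > (0:ℝ), ∀ x ∈ Set.Icc 0 l,
      η τ x = Real.cosh (τ * (x - l)) -
        ∫ t in x..l, Real.cosh (τ * (x - t)) * q t * φ τ t) :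
    (∃ τ₀ > (0:ℝ), ∀ τ ≥ τ₀, φ τ 0 ≠ 0) ∧
      Tendsto (fun τ : ℝ => η τ 0 / φ τ 0 + τ) atTop (nhds 0) := by
  have hval := tendsto_mul_exp_mul_apply_zero hl hq hφcont hφ
  have hnum := tendsto_mul_exp_mul_add_mul_apply_zero hl hq hφcont hφ
    fun τ hτ => hη τ hτ 0 ⟨le_rfl, hl.le⟩
  have hne : ∀ᶠ τ in atTop, φ τ 0 ≠ 0 :=
    (hval.eventually_ne (by norm_num)).mono fun τ h => right_ne_zero_of_mul h
  refine ⟨?_, ?_⟩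
  · obtain ⟨a, ha⟩ := eventually_atTop.mp hne
    exact ⟨max a 1, by positivity, fun τ hτ => ha τ (le_of_max_le_left hτ)⟩
  · have hquot := hnum.div hval (by norm_num)
    rw [zero_div] at hquot
    refine hquot.congr' ?_
    filter_upwards [hne, eventually_gt_atTop 0] with τ hφ0 hτ
    rw [Pi.div_apply]
    field_simp
end

section
/- One has 2τ e^{−τl} ψ_τ(l) → 1 as τ → +∞; in particular there exists τ₀ > 0 such that ψ_τ(l) > 0 for all τ ≥ τ₀ (so that −τ² is not a Dirichlet eigenvalue of −d²/dx² + q on [0, l] for large τ). -/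
set_option maxHeartbeats 1000000


open Real MeasureTheory Filter intervalIntegral

/-- `2τ e^{-τl} ψ_τ(l) → 1` as `τ → +∞`; in particular `ψ_τ(l) > 0`
for all sufficiently large `τ`, so `-τ²` is not a Dirichlet eigenvalue for large `τ`. -/
theorem psi_endpoint_positive (l : ℝ) (hl : 0 < l) (q : ℝ → ℝ)
    (hq : IntegrableOn q (Set.Icc 0 l)) (ψ : ℝ → ℝ → ℝ)
    (hψcont : ∀ τ > (0:ℝ), ContinuousOn (ψ τ) (Set.Icc 0 l))
    (hψ : ∀ τ > (0:ℝ), ∀ x ∈ Set.Icc 0 l,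
      ψ τ x = Real.sinh (τ * x) / τ +
        (1 / τ) * ∫ t in (0:ℝ)..x, Real.sinh (τ * (x - t)) * q t * ψ τ t) :
    Tendsto (fun τ : ℝ => 2 * τ * Real.exp (-(τ * l)) * ψ τ l) atTop (nhds 1) ∧
      ∃ τ₀ > (0:ℝ), ∀ τ ≥ τ₀, 0 < ψ τ l := by
  set Q : ℝ := ∫ t in (0:ℝ)..l, |q t| with hQdef
  have hqi : IntervalIntegrable q volume 0 l := by
    rw [intervalIntegrable_iff_integrableOn_Ioc_of_le hl.le]
    exact hq.mono_set Set.Ioc_subset_Icc_self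
  have hQ0 : 0 ≤ Q := intervalIntegral.integral_nonneg hl.le (fun t _ => abs_nonneg _)
  -- kernel identity and bound
  have hker : ∀ s : ℝ, Real.exp (-s) * Real.sinh s = (1 - Real.exp (-(2*s)))/2 := by
    intro s
    rw [Real.sinh_eq]
    have h1 : Real.exp (-s) * Real.exp s = 1 := by rw [← Real.exp_add]; simp
    have h2 : Real.exp (-(2*s)) = Real.exp (-s) * Real.exp (-s) := by
      rw [← Real.exp_add]; ring_nf
    nlinarith [h1, h2]
  have hhalf : ∀ s : ℝ, 0 ≤ s → Real.exp (-s) * Real.sinh s ≤ 1/2 := by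
    intro s hs
    rw [hker s]
    have := Real.exp_pos (-(2*s))
    linarith
  -- the key quantitative estimate
  have key : ∀ τ : ℝ, max 1 Q ≤ τ →
      |2 * τ * Real.exp (-(τ * l)) * ψ τ l - 1| ≤ Q / τ + Real.exp (-(2 * (τ * l))) := by
    intro τ hτ
    have hτ1 : (1:ℝ) ≤ τ := le_trans (le_max_left _ _) hτ
    have hτQ : Q ≤ τ := le_trans (le_max_right _ _) hτ
    have hτ0 : (0:ℝ) < τ := lt_of_lt_of_le one_pos hτ1
    set u : ℝ → ℝ := fun x => τ * Real.exp (-(τ * x)) * ψ τ x with hudef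
    have hucont : ContinuousOn u (Set.Icc 0 l) := by
      apply ContinuousOn.mul _ (hψcont τ hτ0)
      exact (continuous_const.mul ((continuous_const.mul continuous_id).neg.rexp)).continuousOn
    obtain ⟨x₀, hx₀mem, hx₀max⟩ :=
      isCompact_Icc.exists_isMaxOn (Set.nonempty_Icc.mpr hl.le) hucont.abs
    set K : ℝ := |u x₀| with hKdef
    have hK0 : 0 ≤ K := abs_nonneg _
    have hKmax : ∀ x ∈ Set.Icc 0 l, |u x| ≤ K := fun x hx => hx₀max hx
    -- integrability of the integrand on [0,x]
    have hfi : ∀ x ∈ Set.Icc 0 l,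
        IntervalIntegrable (fun t => Real.sinh (τ*(x-t)) * q t * ψ τ t) volume 0 x := by
      intro x hx
      obtain ⟨hx0, hxl⟩ := hx
      have hsub : Set.uIcc (0:ℝ) x ⊆ Set.Icc 0 l := by
        rw [Set.uIcc_of_le hx0]; exact Set.Icc_subset_Icc le_rfl hxl
      have hqx : IntervalIntegrable q volume 0 x := by
        apply hqi.mono_set
        rw [Set.uIcc_of_le hx0, Set.uIcc_of_le hl.le]
        exact Set.Icc_subset_Icc le_rfl hxl
      have h1 : IntervalIntegrable (fun t => Real.sinh (τ*(x-t)) * q t) volume 0 x :=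
        hqx.continuousOn_mul (Continuous.continuousOn
          (Real.continuous_sinh.comp (continuous_const.mul (continuous_const.sub continuous_id))))
      exact h1.mul_continuousOn ((hψcont τ hτ0).mono hsub)
    -- equation for u
    have heq : ∀ x ∈ Set.Icc 0 l, u x = Real.exp (-(τ*x)) * Real.sinh (τ*x)
        + Real.exp (-(τ*x)) * ∫ t in (0:ℝ)..x, Real.sinh (τ*(x-t)) * q t * ψ τ t := by
      intro x hx
      have := hψ τ hτ0 x hx
      simp only [hudef, this]
      field_simp
    -- bound on the integral term
    have hTbound : ∀ x ∈ Set.Icc 0 l,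
        |Real.exp (-(τ*x)) * ∫ t in (0:ℝ)..x, Real.sinh (τ*(x-t)) * q t * ψ τ t|
          ≤ K * Q / (2*τ) := by
      intro x hx
      obtain ⟨hx0, hxl⟩ := hx
      have hpt : ∀ t ∈ Set.Icc 0 x,
          Real.exp (-(τ*x)) * |Real.sinh (τ*(x-t)) * q t * ψ τ t| ≤ K/(2*τ) * |q t| := by
        intro t ht
        obtain ⟨ht0, htx⟩ := ht
        have hs : 0 ≤ τ*(x-t) := mul_nonneg hτ0.le (by linarith)
        have hsinh : 0 ≤ Real.sinh (τ*(x-t)) := Real.sinh_nonneg_iff.mpr hs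
        have hxe : Real.exp (-(τ*x)) = Real.exp (-(τ*t)) * Real.exp (-(τ*(x-t))) := by
          rw [← Real.exp_add]; ring_nf
        have h1 : Real.exp (-(τ*x)) * Real.sinh (τ*(x-t)) ≤ 1/2 * Real.exp (-(τ*t)) := by
          rw [hxe, mul_comm (Real.exp (-(τ*t))) _, mul_assoc]
          calc Real.exp (-(τ*(x-t))) * (Real.exp (-(τ*t)) * Real.sinh (τ*(x-t)))
              = (Real.exp (-(τ*(x-t))) * Real.sinh (τ*(x-t))) * Real.exp (-(τ*t)) := by ring
            _ ≤ 1/2 * Real.exp (-(τ*t)) := by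
                have := hhalf _ hs
                nlinarith [Real.exp_pos (-(τ*t))]
        have hut : |u t| ≤ K := hKmax t ⟨ht0, le_trans htx hxl⟩
        have huabs : |u t| = τ * Real.exp (-(τ*t)) * |ψ τ t| := by
          rw [hudef]
          simp only
          rw [abs_mul, abs_mul, abs_of_pos hτ0, abs_of_pos (Real.exp_pos _)]
        have h2 : Real.exp (-(τ*t)) * |ψ τ t| ≤ K / τ := by
          rw [le_div_iff₀ hτ0]
          nlinarith [hut, huabs]
        rw [abs_mul, abs_mul, abs_of_nonneg hsinh]
        calc Real.exp (-(τ*x)) * (Real.sinh (τ*(x-t)) * |q t| * |ψ τ t|)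
            = (Real.exp (-(τ*x)) * Real.sinh (τ*(x-t))) * (|q t| * |ψ τ t|) := by ring
          _ ≤ (1/2 * Real.exp (-(τ*t))) * (|q t| * |ψ τ t|) := by
              have hn : 0 ≤ |q t| * |ψ τ t| := mul_nonneg (abs_nonneg _) (abs_nonneg _)
              exact mul_le_mul_of_nonneg_right h1 hn
          _ = 1/2 * |q t| * (Real.exp (-(τ*t)) * |ψ τ t|) := by ring
          _ ≤ 1/2 * |q t| * (K / τ) := by
              have hn : 0 ≤ 1/2 * |q t| := by positivity
              exact mul_le_mul_of_nonneg_left h2 hn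
          _ = K/(2*τ) * |q t| := by ring
      have hfix := hfi x ⟨hx0, hxl⟩
      calc |Real.exp (-(τ*x)) * ∫ t in (0:ℝ)..x, Real.sinh (τ*(x-t)) * q t * ψ τ t|
          = Real.exp (-(τ*x)) * |∫ t in (0:ℝ)..x, Real.sinh (τ*(x-t)) * q t * ψ τ t| := by
            rw [abs_mul, abs_of_pos (Real.exp_pos _)]
        _ ≤ Real.exp (-(τ*x)) * ∫ t in (0:ℝ)..x, |Real.sinh (τ*(x-t)) * q t * ψ τ t| := by
            gcongr
            simpa only [Real.norm_eq_abs] using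
              intervalIntegral.norm_integral_le_integral_norm (f := fun t => Real.sinh (τ*(x-t)) * q t * ψ τ t) (μ := volume) hx0
        _ = ∫ t in (0:ℝ)..x, Real.exp (-(τ*x)) * |Real.sinh (τ*(x-t)) * q t * ψ τ t| := by
            rw [← intervalIntegral.integral_const_mul]
        _ ≤ ∫ t in (0:ℝ)..x, K/(2*τ) * |q t| := by
            apply intervalIntegral.integral_mono_on hx0 _ _ hpt
            · exact (hfix.abs).const_mul _
            · apply IntervalIntegrable.const_mul
              apply (hqi.mono_set _).abs
              rw [Set.uIcc_of_le hx0, Set.uIcc_of_le hl.le]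
              exact Set.Icc_subset_Icc le_rfl hxl
        _ = K/(2*τ) * ∫ t in (0:ℝ)..x, |q t| := by
            rw [intervalIntegral.integral_const_mul]
        _ ≤ K/(2*τ) * Q := by
            have hiq : (∫ t in (0:ℝ)..x, |q t|) ≤ Q := by
              apply intervalIntegral.integral_mono_interval le_rfl hx0 hxl
              · filter_upwards with t using abs_nonneg _
              · exact hqi.abs
            exact mul_le_mul_of_nonneg_left hiq (by positivity)
        _ = K * Q / (2*τ) := by ring
    -- K ≤ 1
    have hK1 : K ≤ 1 := by
      have h := heq x₀ hx₀mem
      have hT := hTbound x₀ hx₀mem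
      have hhead : |Real.exp (-(τ*x₀)) * Real.sinh (τ*x₀)| ≤ 1/2 := by
        have hs : 0 ≤ τ * x₀ := mul_nonneg hτ0.le hx₀mem.1
        rw [abs_of_nonneg (mul_nonneg (Real.exp_pos _).le (Real.sinh_nonneg_iff.mpr hs))]
        exact hhalf _ hs
      have hKle : K ≤ 1/2 + K * Q / (2*τ) := by
        calc K = |u x₀| := rfl
          _ ≤ |Real.exp (-(τ*x₀)) * Real.sinh (τ*x₀)|
              + |Real.exp (-(τ*x₀)) * ∫ t in (0:ℝ)..x₀, Real.sinh (τ*(x₀-t)) * q t * ψ τ t| := by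
              rw [h]; exact abs_add_le _ _
          _ ≤ 1/2 + K * Q / (2*τ) := add_le_add hhead hT
      have hKQ : K * Q ≤ K * τ := mul_le_mul_of_nonneg_left hτQ hK0
      have hdiv : K * Q / (2*τ) ≤ K / 2 := by
        rw [div_le_div_iff₀ (by positivity) (by norm_num : (0:ℝ) < 2)]
        nlinarith
      linarith
    -- conclude the estimate at x = l
    have hlmem : l ∈ Set.Icc (0:ℝ) l := Set.right_mem_Icc.mpr hl.le
    have hul := heq l hlmem
    have hTl := hTbound l hlmem
    have hheadl : Real.exp (-(τ*l)) * Real.sinh (τ*l) = (1 - Real.exp (-(2*(τ*l))))/2 := by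
      rw [hker (τ*l)]
    have hTl' : |Real.exp (-(τ*l)) * ∫ t in (0:ℝ)..l, Real.sinh (τ*(l-t)) * q t * ψ τ t|
        ≤ Q / (2*τ) := by
      refine le_trans hTl ?_
      have h1 : K * Q ≤ 1 * Q := mul_le_mul_of_nonneg_right hK1 hQ0
      calc K * Q / (2*τ) ≤ 1 * Q / (2*τ) := by
            exact div_le_div_of_nonneg_right h1 (by positivity) |>.trans_eq rfl
        _ = Q / (2*τ) := by ring
    have hgoal : 2 * τ * Real.exp (-(τ * l)) * ψ τ l = 2 * u l := by
      rw [hudef]; ring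
    rw [hgoal, hul, hheadl]
    have habs := abs_le.mp hTl'
    have hhq : 2*(Q/(2*τ)) = Q/τ := by field_simp
    rw [abs_le]
    constructor <;>
      nlinarith [habs.1, habs.2, (Real.exp_pos (-(2*(τ*l)))).le, hhq]
  -- the error bound tends to 0
  have hg0 : Tendsto (fun τ : ℝ => Q / τ + Real.exp (-(2 * (τ * l)))) atTop (nhds 0) := by
    have h1 : Tendsto (fun τ : ℝ => Q / τ) atTop (nhds 0) :=
      tendsto_const_nhds.div_atTop tendsto_id
    have h2 : Tendsto (fun τ : ℝ => Real.exp (-(2 * (τ * l)))) atTop (nhds 0) := by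
      apply Real.tendsto_exp_atBot.comp
      have : Tendsto (fun τ : ℝ => (2*l) * τ) atTop atTop :=
        Tendsto.const_mul_atTop (by positivity) tendsto_id
      have h3 : Tendsto (fun τ : ℝ => 2 * (τ * l)) atTop atTop := by
        convert this using 2 with τ; ring
      exact tendsto_neg_atBot_iff.mpr h3
    simpa using h1.add h2
  have hmain : Tendsto (fun τ : ℝ => 2 * τ * Real.exp (-(τ * l)) * ψ τ l) atTop (nhds 1) := by
    have hlo : Tendsto (fun τ : ℝ => 1 - (Q / τ + Real.exp (-(2 * (τ * l))))) atTop (nhds 1) := by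
      simpa using tendsto_const_nhds.sub hg0
    have hhi : Tendsto (fun τ : ℝ => 1 + (Q / τ + Real.exp (-(2 * (τ * l))))) atTop (nhds 1) := by
      simpa using tendsto_const_nhds.add hg0
    apply tendsto_of_tendsto_of_tendsto_of_le_of_le' hlo hhi
    · filter_upwards [eventually_ge_atTop (max 1 Q)] with τ hτ
      have := (abs_le.mp (key τ hτ)).1
      linarith
    · filter_upwards [eventually_ge_atTop (max 1 Q)] with τ hτ
      have := (abs_le.mp (key τ hτ)).2
      linarith
  refine ⟨hmain, ?_⟩
  have hev : ∀ᶠ τ in atTop, (1:ℝ)/2 < 2 * τ * Real.exp (-(τ * l)) * ψ τ l :=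
    hmain.eventually (eventually_gt_nhds (by norm_num))
  obtain ⟨a, ha⟩ := eventually_atTop.mp hev
  refine ⟨max a 1, lt_of_lt_of_le one_pos (le_max_right _ _), fun τ hτ => ?_⟩
  have hτa : a ≤ τ := le_trans (le_max_left _ _) hτ
  have hτ0 : (0:ℝ) < τ := lt_of_lt_of_le one_pos (le_trans (le_max_right _ _) hτ)
  have h := ha τ hτa
  have hpos : 0 < 2 * τ * Real.exp (-(τ * l)) := by positivity
  nlinarith [Real.exp_pos (-(τ * l))]
end

section
/- For every positive integer M, τ^{M} / ψ_τ(l) → 0 as τ → +∞; that is, the reciprocal 1/ψ_τ(l) (which equals the value at 0 of the derivative of the solution normalized by ψ_τ(l)) decays faster than any inverse power of τ. -/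
/-!
Put `Q = ∫₀ˡ |q|`. For `τ ≥ 2Q`, let `B` be the maximum of `|ψ_τ(x)| e^{-τx}` on `[0, l]`.
Since `|sinh s| ≤ e^s` for `s ≥ 0`, the integral equation at the maximiser gives
`B ≤ 1/τ + BQ/τ ≤ 1/τ + B/2`, so `|ψ_τ(x)| ≤ (2/τ) e^{τx}`. Feeding this back into the equation
at `x = l` shows `ψ_τ(l) ≥ sinh(τl)/τ - (2Q/τ²) e^{τl} ≥ e^{τl}/(8τ)` for large `τ`, which beats
every power of `τ`.
-/

open Real MeasureTheory Filter intervalIntegral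

open Set

lemma Real.sinh_le_exp (x : ℝ) : sinh x ≤ exp x := by
  linarith [exp_sub_sinh x, cosh_pos x]

lemma Real.exp_div_four_le_sinh {x : ℝ} (hx : 1 ≤ x) : exp x / 4 ≤ sinh x := by
  have h_exp : 2 ≤ exp x := by linarith [add_one_le_exp x]
  have h_exp_neg : exp (-x) ≤ 1 := exp_le_one_iff.2 (by linarith)
  rw [sinh_eq]
  linarith

/-- `ψ` solves on `[0, l]` the integral equation of the solution of `-y'' + q y = -τ² y`,
`y(0) = 0`, `y'(0) = 1`. -/
def IsSinhVolterraSolution (q ψ : ℝ → ℝ) (τ l : ℝ) : Prop :=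
  ∀ x ∈ Icc 0 l,
    ψ x = sinh (τ * x) / τ + (1 / τ) * ∫ t in (0:ℝ)..x, sinh (τ * (x - t)) * q t * ψ t

section Volterra

variable {q ψ : ℝ → ℝ} {τ l C : ℝ}

lemma abs_integral_sinh_mul_le (hτ : 0 ≤ τ) (hq : IntegrableOn q (Icc 0 l)) {x : ℝ}
    (hx : x ∈ Icc 0 l) (hψ : ∀ t ∈ Icc 0 l, |ψ t| ≤ C * exp (τ * t)) :
    |∫ t in (0:ℝ)..x, sinh (τ * (x - t)) * q t * ψ t| ≤
      C * exp (τ * x) * ∫ t in (0:ℝ)..l, |q t| := by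
  have hq_abs : IntervalIntegrable (fun t => |q t|) volume 0 l :=
    (intervalIntegrable_iff_integrableOn_Icc_of_le (hx.1.trans hx.2)).2 hq.abs
  have hq_abs_x : IntervalIntegrable (fun t => |q t|) volume 0 x :=
    hq_abs.mono_set (by
      rw [uIcc_of_le hx.1, uIcc_of_le (hx.1.trans hx.2)]
      exact Icc_subset_Icc le_rfl hx.2)
  have hC : 0 ≤ C * exp (τ * x) := (abs_nonneg _).trans (hψ x hx)
  have h_pointwise : ∀ᵐ t ∂volume.restrict (uIoc 0 x),
      ‖sinh (τ * (x - t)) * q t * ψ t‖ ≤ C * exp (τ * x) * |q t| := by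
    refine (ae_restrict_mem measurableSet_uIoc).mono fun t ht => ?_
    rw [uIoc_of_le hx.1] at ht
    have h_sinh : |sinh (τ * (x - t))| ≤ exp (τ * (x - t)) := by
      rw [abs_of_nonneg (sinh_nonneg_iff.2 (by nlinarith [ht.2]))]
      exact sinh_le_exp _
    calc ‖sinh (τ * (x - t)) * q t * ψ t‖
        = |sinh (τ * (x - t))| * |q t| * |ψ t| := by simp only [norm_eq_abs, abs_mul]
      _ ≤ exp (τ * (x - t)) * |q t| * (C * exp (τ * t)) := by
          gcongr
          exact hψ t ⟨ht.1.le, ht.2.trans hx.2⟩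
      _ = C * exp (τ * x) * |q t| := by rw [mul_sub, exp_sub]; field_simp
  calc |∫ t in (0:ℝ)..x, sinh (τ * (x - t)) * q t * ψ t|
      ≤ abs (∫ t in (0:ℝ)..x, C * exp (τ * x) * |q t|) :=
        norm_integral_le_abs_of_norm_le h_pointwise (hq_abs_x.const_mul _)
    _ = C * exp (τ * x) * ∫ t in (0:ℝ)..x, |q t| := by
        rw [intervalIntegral.integral_const_mul, abs_of_nonneg
          (mul_nonneg hC (integral_nonneg hx.1 fun t _ => abs_nonneg _))]
    _ ≤ C * exp (τ * x) * ∫ t in (0:ℝ)..l, |q t| := by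
        gcongr
        exact integral_mono_interval le_rfl hx.1 hx.2
          (Eventually.of_forall fun t => abs_nonneg _) hq_abs

lemma IsSinhVolterraSolution.abs_sub_le (hψ : IsSinhVolterraSolution q ψ τ l) (hτ : 0 < τ)
    (hq : IntegrableOn q (Icc 0 l)) (hC : ∀ t ∈ Icc 0 l, |ψ t| ≤ C * exp (τ * t)) {x : ℝ}
    (hx : x ∈ Icc 0 l) :
    |ψ x - sinh (τ * x) / τ| ≤ C * (∫ t in (0:ℝ)..l, |q t|) / τ * exp (τ * x) := by
  rw [hψ x hx, add_sub_cancel_left, abs_mul, abs_of_pos (one_div_pos.2 hτ)]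
  calc 1 / τ * |∫ t in (0:ℝ)..x, sinh (τ * (x - t)) * q t * ψ t|
      ≤ 1 / τ * (C * exp (τ * x) * ∫ t in (0:ℝ)..l, |q t|) := by
        gcongr
        exact abs_integral_sinh_mul_le hτ.le hq hx hC
    _ = C * (∫ t in (0:ℝ)..l, |q t|) / τ * exp (τ * x) := by ring

lemma IsSinhVolterraSolution.abs_le_two_div_mul_exp (hψ : IsSinhVolterraSolution q ψ τ l)
    (hτ : 0 < τ) (hl : 0 ≤ l) (hq : IntegrableOn q (Icc 0 l))
    (hψc : ContinuousOn ψ (Icc 0 l)) (hτq : 2 * ∫ t in (0:ℝ)..l, |q t| ≤ τ) :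
    ∀ x ∈ Icc 0 l, |ψ x| ≤ 2 / τ * exp (τ * x) := by
  set Q := ∫ t in (0:ℝ)..l, |q t|
  -- `B` is the best constant in `|ψ t| ≤ B e^{τ t}`, attained at `x₀` by compactness.
  obtain ⟨x₀, hx₀, hmax⟩ := isCompact_Icc.exists_isMaxOn (nonempty_Icc.2 hl)
    (hψc.abs.mul (continuous_exp.comp (continuous_const.mul continuous_id).neg).continuousOn)
  set B := |ψ x₀| * exp (-(τ * x₀))
  have h_weighted : ∀ x, |ψ x| = |ψ x| * exp (-(τ * x)) * exp (τ * x) := fun x => by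
    rw [mul_assoc, ← exp_add, neg_add_cancel, exp_zero, mul_one]
  have hB : ∀ t ∈ Icc 0 l, |ψ t| ≤ B * exp (τ * t) := fun t ht => by
    rw [h_weighted t]
    exact mul_le_mul_of_nonneg_right (hmax ht) (exp_pos _).le
  have h_sinh : |sinh (τ * x₀) / τ| ≤ 1 / τ * exp (τ * x₀) := by
    rw [abs_div, abs_of_pos hτ, abs_of_nonneg (sinh_nonneg_iff.2 (mul_nonneg hτ.le hx₀.1)),
      div_eq_inv_mul, one_div]
    gcongr
    exact sinh_le_exp _
  have h_at_x₀ : B * exp (τ * x₀) ≤ (1 / τ + B * Q / τ) * exp (τ * x₀) := by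
    calc B * exp (τ * x₀) = |ψ x₀| := (h_weighted x₀).symm
      _ ≤ |sinh (τ * x₀) / τ| + |ψ x₀ - sinh (τ * x₀) / τ| := by
          linarith [abs_sub_abs_le_abs_sub (ψ x₀) (sinh (τ * x₀) / τ)]
      _ ≤ 1 / τ * exp (τ * x₀) + B * Q / τ * exp (τ * x₀) :=
          add_le_add h_sinh (hψ.abs_sub_le hτ hq hB hx₀)
      _ = (1 / τ + B * Q / τ) * exp (τ * x₀) := by ring
  have h_half : B * Q / τ ≤ B / 2 := by
    rw [div_le_div_iff₀ hτ two_pos]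
    nlinarith [mul_nonneg (abs_nonneg (ψ x₀)) (exp_pos (-(τ * x₀))).le]
  have hB_le : B ≤ 2 / τ := by
    have := le_of_mul_le_mul_right h_at_x₀ (exp_pos _)
    rw [div_eq_mul_one_div 2 τ]
    linarith
  exact fun x hx => (hB x hx).trans (mul_le_mul_of_nonneg_right hB_le (exp_pos _).le)

lemma IsSinhVolterraSolution.exp_le_eight_mul_apply_right (hψ : IsSinhVolterraSolution q ψ τ l)
    (hτ : 0 < τ) (hl : 0 ≤ l) (hq : IntegrableOn q (Icc 0 l))
    (hψc : ContinuousOn ψ (Icc 0 l)) (hτl : 1 ≤ τ * l) (hτq : 16 * ∫ t in (0:ℝ)..l, |q t| ≤ τ) :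
    exp (τ * l) ≤ 8 * τ * ψ l := by
  set Q := ∫ t in (0:ℝ)..l, |q t|
  have h_bound := hψ.abs_le_two_div_mul_exp hτ hl hq hψc (by linarith)
  have h_dev := (abs_sub_le_iff.1 (hψ.abs_sub_le hτ hq h_bound ⟨hl, le_rfl⟩)).2
  have h_sinh := exp_div_four_le_sinh hτl
  have h_dev_mul : sinh (τ * l) - τ * ψ l ≤ 2 * Q / τ * exp (τ * l) := by
    calc sinh (τ * l) - τ * ψ l = τ * (sinh (τ * l) / τ - ψ l) := by field_simp
      _ ≤ τ * (2 / τ * Q / τ * exp (τ * l)) := by gcongr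
      _ = 2 * Q / τ * exp (τ * l) := by field_simp
  have h_small : 2 * Q / τ ≤ 1 / 8 := by
    rw [div_le_div_iff₀ hτ (by norm_num)]
    linarith
  have := mul_le_mul_of_nonneg_right h_small (exp_pos (τ * l)).le
  linarith

end Volterra

lemma tendsto_pow_div_atTop_nhds_zero_of_exp_le {g : ℝ → ℝ} {b c : ℝ} (hb : 0 < b) (hc : 0 < c)
    (n : ℕ) (hg : ∀ᶠ x in atTop, exp (b * x) ≤ c * x ^ n * g x) (M : ℕ) :
    Tendsto (fun x => x ^ M / g x) atTop (nhds 0) := by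
  have h_growth : Tendsto (fun x : ℝ => c⁻¹ * (exp (b * x) / x ^ ((n + M : ℕ) : ℝ))) atTop atTop :=
    (tendsto_exp_mul_div_rpow_atTop _ b hb).const_mul_atTop (inv_pos.2 hc)
  have h_inv : Tendsto (fun x => g x / x ^ M) atTop atTop := by
    refine tendsto_atTop_mono' atTop ?_ h_growth
    filter_upwards [hg, eventually_gt_atTop 0] with x hx hx₀
    calc c⁻¹ * (exp (b * x) / x ^ ((n + M : ℕ) : ℝ)) = c⁻¹ * exp (b * x) / x ^ n / x ^ M := by
          rw [rpow_natCast, pow_add]; ring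
      _ ≤ g x / x ^ M := by
          gcongr
          rw [div_le_iff₀ (by positivity), inv_mul_le_iff₀ hc]
          linarith
  exact h_inv.inv_tendsto_atTop.congr fun x => inv_div _ _

theorem inverse_psi_superpolynomial_decay_general (l : ℝ) (hl : 0 < l) (q : ℝ → ℝ)
    (hq : IntegrableOn q (Set.Icc 0 l)) (ψ : ℝ → ℝ → ℝ)
    (hψcont : ∀ τ > (0:ℝ), ContinuousOn (ψ τ) (Set.Icc 0 l))
    (hψ : ∀ τ > (0:ℝ), ∀ x ∈ Set.Icc 0 l,
      ψ τ x = Real.sinh (τ * x) / τ +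
        (1 / τ) * ∫ t in (0:ℝ)..x, Real.sinh (τ * (x - t)) * q t * ψ τ t)
    (M : ℕ) :
    Tendsto (fun τ : ℝ => τ ^ M / ψ τ l) atTop (nhds 0) := by
  refine tendsto_pow_div_atTop_nhds_zero_of_exp_le hl (by norm_num : (0:ℝ) < 8) 1 ?_ M
  filter_upwards [eventually_gt_atTop 0, eventually_ge_atTop (1 / l),
    eventually_ge_atTop (16 * ∫ t in (0:ℝ)..l, |q t|)] with τ hτ hτl hτq
  rw [pow_one, mul_comm l]
  exact IsSinhVolterraSolution.exp_le_eight_mul_apply_right (hψ τ hτ) hτ hl.le hq (hψcont τ hτ)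
    ((div_le_iff₀ hl).1 hτl) hτq

/-- For every positive integer `M`, `τ^M / ψ_τ(l) → 0` as `τ → +∞`:
the reciprocal `1/ψ_τ(l)` decays faster than any inverse power of `τ`. -/
theorem inverse_psi_superpolynomial_decay (l : ℝ) (hl : 0 < l) (q : ℝ → ℝ)
    (hq : IntegrableOn q (Set.Icc 0 l)) (ψ : ℝ → ℝ → ℝ)
    (hψcont : ∀ τ > (0:ℝ), ContinuousOn (ψ τ) (Set.Icc 0 l))
    (hψ : ∀ τ > (0:ℝ), ∀ x ∈ Set.Icc 0 l,
      ψ τ x = Real.sinh (τ * x) / τ +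
        (1 / τ) * ∫ t in (0:ℝ)..x, Real.sinh (τ * (x - t)) * q t * ψ τ t)
    (M : ℕ) (hM : 0 < M) :
    Tendsto (fun τ : ℝ => τ ^ M / ψ τ l) atTop (nhds 0) :=
  inverse_psi_superpolynomial_decay_general l hl q hq ψ hψcont hψ M
end

section
/- Let G : ℂ → ℂ be an entire function that vanishes nowhere, and suppose there exist constants C > 0 and A > 0 such that |G(z)| ≤ C e^{A|z|} for all z ∈ ℂ. If G(x) → 1 as x → −∞ along the real axis, then G(z) = 1 for all z ∈ ℂ. (This is the Liouville-type argument used in the proof of the trace formulae: the ratio of the two characteristic determinants is a zero-free entire function of exponential type tending to 1 at −∞, hence identically 1.) -/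
/-!
Since `G` has no zeros, `G = exp ∘ g` for an entire `g`, and the growth bound becomes
`Re g z ≤ log C + A‖z‖`. By Borel–Carathéodory `g` then grows at most linearly, so Cauchy's
estimate bounds `g'`, which is therefore constant by Liouville: `G z = exp (a z + b)`.
Along the real axis `G (x + c) = exp (a c) G x`, so the limit at `-∞` forces `exp (a c) = 1`
for every real `c`, whence `a = 0`, and then `exp b = 1`.
-/

open Complex Filter Metric Topology

theorem exists_differentiable_exp_eq_of_ne_zero {G : ℂ → ℂ} (hG : Differentiable ℂ G)
    (hne : ∀ z, G z ≠ 0) : ∃ g : ℂ → ℂ, Differentiable ℂ g ∧ ∀ z, exp (g z) = G z := by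
  have hG' : Differentiable ℂ (deriv G) := fun z => (hG.analyticAt z).deriv.differentiableAt
  obtain ⟨F, hF⟩ := (hG'.div hG hne).isExactOn_univ
  have hFd : ∀ z, HasDerivAt F (deriv G z / G z) z := fun z => hF z (Set.mem_univ z)
  have hconst : ∀ z, G z * exp (-F z) = G 0 * exp (-F 0) := by
    have hderiv : ∀ z, HasDerivAt (fun w => G w * exp (-F w)) 0 z := fun z =>
      ((hG z).hasDerivAt.mul (hFd z).neg.cexp).congr_deriv (by field_simp [hne z]; ring)
    exact fun z => is_const_of_deriv_eq_zero (fun z => (hderiv z).differentiableAt)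
      (fun z => (hderiv z).deriv) z 0
  have hFdiff : Differentiable ℂ F := fun z => (hFd z).differentiableAt
  refine ⟨fun z => F z + log (G 0 * exp (-F 0)), hFdiff.add_const _, fun z => ?_⟩
  rw [exp_add, exp_log (mul_ne_zero (hne 0) (exp_ne_zero _)), ← hconst z, mul_left_comm,
    ← exp_add, add_neg_cancel, exp_zero, mul_one]

section LinearGrowth

variable {F : Type*} [NormedAddCommGroup F] [NormedSpace ℂ F]

theorem norm_deriv_le_of_norm_le_linear {f : ℂ → F} (hf : Differentiable ℂ f)
    {a b : ℝ} (hb : 0 ≤ b) (hab : ∀ z, ‖f z‖ ≤ a + b * ‖z‖) (c : ℂ) : ‖deriv f c‖ ≤ b := by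
  have hcauchy : ∀ R > 0, ‖deriv f c‖ ≤ (a + b * ‖c‖) / R + b := by
    intro R hR
    have hsphere : ∀ z ∈ sphere c R, ‖f z‖ ≤ a + b * (‖c‖ + R) := fun z hz => by
      have : ‖z‖ ≤ ‖c‖ + R := by
        simpa [mem_sphere_iff_norm.1 hz] using norm_le_norm_add_norm_sub' z c
      nlinarith [hab z]
    calc ‖deriv f c‖ ≤ (a + b * (‖c‖ + R)) / R :=
          norm_deriv_le_of_forall_mem_sphere_norm_le hR hf.diffContOnCl hsphere
      _ = (a + b * ‖c‖) / R + b := by field_simp; ring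
  have hlim : Tendsto (fun R : ℝ => (a + b * ‖c‖) / R + b) atTop (𝓝 b) := by
    simpa using (tendsto_const_nhds.div_atTop tendsto_id).add_const b
  exact ge_of_tendsto hlim ((eventually_gt_atTop 0).mono hcauchy)

theorem eq_add_smul_of_norm_le_linear [CompleteSpace F] {f : ℂ → F} (hf : Differentiable ℂ f)
    {a b : ℝ} (hb : 0 ≤ b) (hab : ∀ z, ‖f z‖ ≤ a + b * ‖z‖) (z : ℂ) :
    f z = f 0 + z • deriv f 0 := by
  have hf' : Differentiable ℂ (deriv f) := fun z => (hf.analyticAt z).deriv.differentiableAt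
  have hconst : ∀ w, deriv f w = deriv f 0 := fun w =>
    hf'.apply_eq_apply_of_bounded (isBounded_iff_forall_norm_le.2
      ⟨b, by rintro _ ⟨w, rfl⟩; exact norm_deriv_le_of_norm_le_linear hf hb hab w⟩) w 0
  have hderiv : ∀ w, HasDerivAt (fun w => f w - w • deriv f 0) 0 w := fun w =>
    ((hf w).hasDerivAt.sub ((hasDerivAt_id w).smul_const (deriv f 0))).congr_deriv
      (by rw [one_smul, hconst w, sub_self])
  have := is_const_of_deriv_eq_zero (fun w => (hderiv w).differentiableAt)
    (fun w => (hderiv w).deriv) z 0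
  simpa [sub_eq_iff_eq_add, add_comm] using this

end LinearGrowth

theorem exists_norm_le_linear_of_re_le {g : ℂ → ℂ} (hg : Differentiable ℂ g) {K A : ℝ}
    (hA : 0 ≤ A) (hre : ∀ z, (g z).re ≤ K + A * ‖z‖) :
    ∃ a b : ℝ, 0 ≤ b ∧ ∀ z, ‖g z‖ ≤ a + b * ‖z‖ := by
  refine ⟨2 * (|K| + A + 1) + 3 * ‖g 0‖, 4 * A, by positivity, fun z => ?_⟩
  -- On the ball of radius `2‖z‖ + 1` both Borel–Carathéodory quotients stay bounded.
  set R := 2 * ‖z‖ + 1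
  set M := |K| + A * R + 1
  have hM : 0 < M := by positivity
  have hmaps : Set.MapsTo g (ball 0 R) {w | w.re ≤ M} := fun w hw => by
    have hwR : ‖w‖ ≤ R := (mem_ball_zero_iff.1 hw).le
    have : A * ‖w‖ ≤ A * R := mul_le_mul_of_nonneg_left hwR hA
    show (g w).re ≤ M
    linarith [hre w, le_abs_self K]
  have hbc := borelCaratheodory hM hg.differentiableOn hmaps (by positivity)
    (mem_ball_zero_iff.2 (by linarith [norm_nonneg z] : ‖z‖ < R))
  have hden : R - ‖z‖ = ‖z‖ + 1 := by ring
  rw [hden] at hbc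
  have hM_term : 2 * M * ‖z‖ / (‖z‖ + 1) ≤ 2 * M := by
    rw [div_le_iff₀ (by positivity)]; nlinarith [norm_nonneg z]
  have hg0_term : ‖g 0‖ * (R + ‖z‖) / (‖z‖ + 1) ≤ 3 * ‖g 0‖ := by
    rw [div_le_iff₀ (by positivity)]; nlinarith [norm_nonneg z, norm_nonneg (g 0)]
  linarith

theorem eq_add_mul_of_re_le_linear {g : ℂ → ℂ} (hg : Differentiable ℂ g) {K A : ℝ}
    (hA : 0 ≤ A) (hre : ∀ z, (g z).re ≤ K + A * ‖z‖) (z : ℂ) : g z = g 0 + z * deriv g 0 := by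
  obtain ⟨a, b, hb, hab⟩ := exists_norm_le_linear_of_re_le hg hA hre
  exact eq_add_smul_of_norm_le_linear hg hb hab z

theorem eq_zero_and_exp_eq_of_tendsto_atBot {a b L : ℂ} (hL : L ≠ 0)
    (h : Tendsto (fun x : ℝ => exp (a * x + b)) atBot (𝓝 L)) : a = 0 ∧ exp b = L := by
  have hperiod : ∀ c : ℝ, exp (a * c) = 1 := fun c => by
    have hshift : Tendsto (fun x : ℝ => exp (a * c) * exp (a * x + b)) atBot (𝓝 L) := by
      convert h.comp (tendsto_atBot_add_const_right _ c tendsto_id) using 2 with x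
      simp only [Function.comp_apply, id_eq, ofReal_add, ← exp_add]
      ring_nf
    exact (mul_eq_right₀ hL).1 (tendsto_nhds_unique (h.const_mul _) hshift)
  have ha : a = 0 := by
    have hd : HasDerivAt (fun c : ℝ => exp (a * c)) a 0 := by
      simpa using (((hasDerivAt_id (0 : ℂ)).const_mul a).cexp).comp_ofReal
    rw [funext hperiod] at hd
    exact hd.unique (hasDerivAt_const _ _)
  subst ha
  exact ⟨rfl, by simpa using h⟩

/-- Liouville-type argument. If `G : ℂ → ℂ` is entire, zero-free,
of exponential type (`|G(z)| ≤ C e^{A|z|}`), and `G(x) → 1` as `x → -∞` along the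
real axis, then `G ≡ 1`. -/
theorem liouville_type_argument (G : ℂ → ℂ) (hG : Differentiable ℂ G)
    (hne : ∀ z, G z ≠ 0)
    (hbd : ∃ C > (0:ℝ), ∃ A > (0:ℝ), ∀ z : ℂ,
      ‖G z‖ ≤ C * Real.exp (A * ‖z‖))
    (hlim : Tendsto (fun x : ℝ => G (x : ℂ)) atBot (nhds 1)) :
    ∀ z : ℂ, G z = 1 := by
  obtain ⟨C, hC, A, hA, hGle⟩ := hbd
  obtain ⟨g, hg, hgG⟩ := exists_differentiable_exp_eq_of_ne_zero hG hne
  have hre : ∀ z, (g z).re ≤ Real.log C + A * ‖z‖ := fun z => by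
    rw [← Real.exp_le_exp, Real.exp_add, Real.exp_log hC, ← norm_exp, hgG]
    exact hGle z
  have haffine : ∀ z, G z = exp (deriv g 0 * z + g 0) := fun z => by
    rw [← hgG, eq_add_mul_of_re_le_linear hg hA.le hre z, add_comm, mul_comm]
  obtain ⟨hslope, hconst⟩ := eq_zero_and_exp_eq_of_tendsto_atBot one_ne_zero
    (by simpa only [haffine] using hlim)
  intro z
  rw [haffine, hslope, zero_mul, zero_add, hconst]
end
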